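/- arXiv:1102.3191 — 10 statements merged into one kernel-verified Lean document; each statement's English description precedes it below -/
import Mathlib

section
/- Let k be a field and m, s, t natural numbers. In the polynomial ring R = k[x_0,…,x_m, y_0,…,y_m], let I be the ideal generated by the binomials x_i·y_j − x_j·y_i for all 0 ≤ i, j ≤ m. Then the k-dimension of the bidegree-(s,t) graded piece of R/I equals the binomial coefficient C(s+t+m, m). -/
open MvPolynomial

/-- The k-subspace of the polynomial ring `k[x_σ, y_τ]` spanned by the bihomogeneous
polynomials of bidegree `(s, t)`, where each `x` variable has bidegree `(1,0)` and each
`y` variable has bidegree `(0,1)`. -/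
noncomputable def bidegPiece (k : Type*) [Field k] (σ τ : Type*) [Fintype σ] [Fintype τ]
    (s t : ℕ) : Submodule k (MvPolynomial (σ ⊕ τ) k) :=
  Submodule.span k {P : MvPolynomial (σ ⊕ τ) k |
    ∀ d ∈ P.support, (∑ i : σ, d (Sum.inl i)) = s ∧ (∑ j : τ, d (Sum.inr j)) = t}

/-! The relations `x_i y_j = x_j y_i` let one trade an `x`-variable of a monomial for a
`y`-variable, so modulo `I` a monomial of bidegree `(s, t)` depends only on the multiset of its
`s + t` indices. Conversely, the substitution `x_i, y_i ↦ z_i` kills `I` and sends these classes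
to the distinct monomials of degree `s + t` in `k[z_0, …, z_m]`. Hence they form a basis of the
bidegree `(s, t)` piece of `R/I`, whose dimension is the number `C(s + t + m, m)` of multisets of
size `s + t` on `m + 1` letters. -/

theorem Multiset.prod_map_mul_prod_map_eq_of_add_eq {M σ : Type*} [CommMonoid M]
    {x y : σ → M} (hxy : ∀ i j, x i * y j = x j * y i) {A B A' B' : Multiset σ}
    (h : A + B = A' + B') (hc : card A = card A') :
    (A.map x).prod * (B.map y).prod = (A'.map x).prod * (B'.map y).prod := by
  induction A using Multiset.induction_on generalizing B A' B' with
  | empty =>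
    obtain rfl : A' = 0 := card_eq_zero.mp (by simpa using hc.symm)
    rw [zero_add, zero_add] at h
    rw [h]
  | cons i A ih =>
    have of_mem : ∀ A'' B'', i ∈ A'' → i ::ₘ A + B = A'' + B'' → card (i ::ₘ A) = card A'' →
        ((i ::ₘ A).map x).prod * (B.map y).prod = (A''.map x).prod * (B''.map y).prod := by
      intro A'' B'' hi h hc
      obtain ⟨A₀, rfl⟩ := exists_cons_of_mem hi
      rw [cons_add, cons_add, cons_inj_right] at h
      rw [card_cons, card_cons, Nat.succ_inj] at hc
      simp only [map_cons, prod_cons, mul_assoc, ih h hc]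
    rcases mem_add.mp (h ▸ mem_add.mpr (Or.inl (mem_cons_self i A))) with hi | hi
    · exact of_mem A' B' hi h hc
    · -- `i` only occurs among the `y`-indices on the right: trade it for some `x`-index there.
      obtain ⟨B₀, rfl⟩ := exists_cons_of_mem hi
      obtain ⟨j, hj⟩ := card_pos_iff_exists_mem.mp (hc ▸ card_pos.mpr cons_ne_zero)
      obtain ⟨A₀, rfl⟩ := exists_cons_of_mem hj
      have swap : ((j ::ₘ A₀).map x).prod * ((i ::ₘ B₀).map y).prod =
          ((i ::ₘ A₀).map x).prod * ((j ::ₘ B₀).map y).prod := by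
        simp only [map_cons, prod_cons]
        rw [mul_mul_mul_comm, hxy, mul_mul_mul_comm]
      rw [swap]
      refine of_mem _ _ (mem_cons_self i A₀) ?_ (by simpa using hc)
      rw [h, cons_add, cons_add, add_cons, add_cons, cons_swap]

theorem Finsupp.sum_univ_eq_card_toMultiset {σ : Type*} [Fintype σ] (a : σ →₀ ℕ) :
    ∑ i, a i = Multiset.card (Finsupp.toMultiset a) := by
  rw [Finsupp.card_toMultiset, Finsupp.sum_fintype _ _ fun _ => rfl]
  rfl

namespace Sym

variable {α : Type*}

noncomputable def unappend (s t : ℕ) (C : Sym α (s + t)) : Sym α s × Sym α t :=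
  (⟨(C.1.toList.take s : Multiset α), by simp⟩, ⟨(C.1.toList.drop s : Multiset α), by simp⟩)

theorem append_unappend {s t : ℕ} (C : Sym α (s + t)) :
    (C.unappend s t).1.append (C.unappend s t).2 = C :=
  Sym.ext <| by rw [coe_append]; simp [unappend]

end Sym

namespace MvPolynomial

variable {R σ τ : Type*} [CommSemiring R]

theorem prod_toMultiset_map_X (d : σ →₀ ℕ) :
    ((Finsupp.toMultiset d).map X).prod = monomial d (1 : R) := by
  rw [Finsupp.toMultiset_map, Finsupp.prod_toMultiset,
    Finsupp.prod_mapDomain_index (fun _ => pow_zero _) (fun _ _ _ => pow_add _ _ _),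
    monomial_eq, C_1, one_mul]

variable (R) in
noncomputable def bimonomial (A : Multiset σ) (B : Multiset τ) : MvPolynomial (σ ⊕ τ) R :=
  ((A.map Sum.inl + B.map Sum.inr).map X).prod

theorem monomial_sumElim_one (a : σ →₀ ℕ) (b : τ →₀ ℕ) :
    monomial (Finsupp.sumElim a b) (1 : R) =
      bimonomial R (Finsupp.toMultiset a) (Finsupp.toMultiset b) := by
  rw [bimonomial, Finsupp.toMultiset_map, Finsupp.toMultiset_map, ← Finsupp.toMultiset_add,
    ← Finsupp.sumElim_eq_add, prod_toMultiset_map_X]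

theorem map_bimonomial {S : Type*} [CommSemiring S] (f : MvPolynomial (σ ⊕ τ) R →+* S)
    (A : Multiset σ) (B : Multiset τ) :
    f (bimonomial R A B) =
      (A.map fun i => f (X (Sum.inl i))).prod * (B.map fun j => f (X (Sum.inr j))).prod := by
  rw [bimonomial, map_multiset_prod]
  simp only [Multiset.map_add, Multiset.map_map, Multiset.prod_add, Function.comp_def]

end MvPolynomial

open MvPolynomial

theorem bidegPiece_eq_span_bimonomial (k : Type*) [Field k] (σ τ : Type*) [Fintype σ]
    [Fintype τ] (s t : ℕ) :
    bidegPiece k σ τ s t =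
      Submodule.span k
        (Set.range fun p : Sym σ s × Sym τ t => bimonomial k (p.1 : Multiset σ) p.2) := by
  classical
  apply le_antisymm
  · refine Submodule.span_le.mpr fun P hP => ?_
    rw [SetLike.mem_coe, P.as_sum]
    refine Submodule.sum_mem _ fun d hd => ?_
    obtain ⟨hs, ht⟩ := hP d hd
    obtain ⟨a, b, rfl⟩ : ∃ a b, Finsupp.sumElim a b = d :=
      ⟨_, _, Finsupp.comapDomain_sumElim_comapDomain d⟩
    simp only [Finsupp.sumElim_inl, Finsupp.sumElim_inr,
      Finsupp.sum_univ_eq_card_toMultiset] at hs ht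
    rw [← mul_one (coeff _ P), ← smul_eq_mul, ← smul_monomial, monomial_sumElim_one]
    exact Submodule.smul_mem _ _ (Submodule.subset_span ⟨(⟨_, hs⟩, ⟨_, ht⟩), rfl⟩)
  · refine Submodule.span_le.mpr ?_
    rintro _ ⟨⟨⟨A, hA⟩, ⟨B, hB⟩⟩, rfl⟩
    refine Submodule.subset_span fun d (hd : d ∈ (bimonomial k A B).support) => ?_
    rw [← Multiset.toFinsupp_toMultiset A, ← Multiset.toFinsupp_toMultiset B,
      ← monomial_sumElim_one] at hd
    obtain rfl := Finset.mem_singleton.mp (support_monomial_subset hd)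
    simp only [Finsupp.sumElim_inl, Finsupp.sumElim_inr, Finsupp.sum_univ_eq_card_toMultiset,
      Multiset.toFinsupp_toMultiset, hA, hB, and_self]

section Diagonal

variable (k : Type*) [Field k] (σ : Type*)

noncomputable def diagonalIdeal : Ideal (MvPolynomial (σ ⊕ σ) k) :=
  Ideal.span {f | ∃ i j : σ, f = X (Sum.inl i) * X (Sum.inr j) - X (Sum.inl j) * X (Sum.inr i)}

theorem diagonalIdeal_le_ker_rename :
    diagonalIdeal k σ ≤ RingHom.ker (rename (R := k) (Sum.elim id id : σ ⊕ σ → σ)) := by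
  refine Ideal.span_le.mpr ?_
  rintro _ ⟨i, j, rfl⟩
  simp only [SetLike.mem_coe, RingHom.mem_ker, map_sub, map_mul, rename_X, Sum.elim_inl,
    Sum.elim_inr, id_eq]
  ring

noncomputable def diagonalRestrict :
    MvPolynomial (σ ⊕ σ) k ⧸ diagonalIdeal k σ →ₐ[k] MvPolynomial σ k :=
  Ideal.Quotient.liftₐ _ (rename (Sum.elim id id)) fun _ h =>
    RingHom.mem_ker.mp (diagonalIdeal_le_ker_rename k σ h)

variable {k σ}

theorem mkₐ_bimonomial_eq {A B A' B' : Multiset σ} (h : A + B = A' + B')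
    (hc : Multiset.card A = Multiset.card A') :
    Ideal.Quotient.mkₐ k (diagonalIdeal k σ) (bimonomial k A B) =
      Ideal.Quotient.mkₐ k (diagonalIdeal k σ) (bimonomial k A' B') := by
  simp only [← AlgHom.coe_toRingHom, map_bimonomial]
  refine Multiset.prod_map_mul_prod_map_eq_of_add_eq (fun i j => ?_) h hc
  simp only [AlgHom.coe_toRingHom, ← map_mul, Ideal.Quotient.mkₐ_eq_mk, Ideal.Quotient.eq]
  exact Ideal.subset_span ⟨i, j, rfl⟩

theorem diagonalRestrict_mkₐ_bimonomial [DecidableEq σ] (A B : Multiset σ) :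
    diagonalRestrict k σ (Ideal.Quotient.mkₐ k (diagonalIdeal k σ) (bimonomial k A B)) =
      monomial (Multiset.toFinsupp (A + B)) 1 := by
  rw [diagonalRestrict, ← AlgHom.comp_apply, Ideal.Quotient.liftₐ_comp, ← AlgHom.coe_toRingHom,
    map_bimonomial]
  simp only [AlgHom.coe_toRingHom, rename_X, Sum.elim_inl, Sum.elim_inr, id_eq]
  rw [← Multiset.prod_add, ← Multiset.map_add, ← prod_toMultiset_map_X,
    Multiset.toFinsupp_toMultiset]

-- By `mkₐ_bimonomial_eq`, any other splitting of `C` would give the same class.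
noncomputable def diagonalMonomial (s t : ℕ) (C : Sym σ (s + t)) :
    MvPolynomial (σ ⊕ σ) k ⧸ diagonalIdeal k σ :=
  Ideal.Quotient.mkₐ k _ (bimonomial k ((C.unappend s t).1 : Multiset σ)
    ((C.unappend s t).2 : Multiset σ))

theorem linearIndependent_diagonalMonomial [DecidableEq σ] (s t : ℕ) :
    LinearIndependent k (diagonalMonomial (k := k) (σ := σ) s t) := by
  refine LinearIndependent.of_comp (diagonalRestrict k σ).toLinearMap ?_
  have : (diagonalRestrict k σ).toLinearMap ∘ diagonalMonomial s t =
      basisMonomials σ k ∘ fun C : Sym σ (s + t) => Multiset.toFinsupp C.1 := by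
    ext1 C
    rw [Function.comp_apply, AlgHom.toLinearMap_apply, diagonalMonomial,
      diagonalRestrict_mkₐ_bimonomial, ← Sym.coe_append, Sym.append_unappend,
      Function.comp_apply, coe_basisMonomials]
    rfl
  rw [this]
  exact (basisMonomials σ k).linearIndependent.comp _
    (Multiset.toFinsupp.injective.comp Sym.coe_injective)

theorem map_mkₐ_bidegPiece [Fintype σ] (s t : ℕ) :
    (bidegPiece k σ σ s t).map (Ideal.Quotient.mkₐ k (diagonalIdeal k σ)).toLinearMap =
      Submodule.span k (Set.range (diagonalMonomial s t)) := by
  rw [bidegPiece_eq_span_bimonomial, Submodule.map_span, ← Set.range_comp]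
  congr 1
  ext q
  constructor
  · rintro ⟨⟨A, B⟩, rfl⟩
    refine ⟨A.append B, mkₐ_bimonomial_eq ?_ ?_⟩
    · rw [← Sym.coe_append, ← Sym.coe_append, Sym.append_unappend]
    · rw [Sym.card_coe, Sym.card_coe]
  · rintro ⟨C, rfl⟩
    exact ⟨C.unappend s t, rfl⟩

theorem finrank_map_mkₐ_bidegPiece [Fintype σ] [DecidableEq σ] (s t : ℕ) :
    Module.finrank k
      ((bidegPiece k σ σ s t).map (Ideal.Quotient.mkₐ k (diagonalIdeal k σ)).toLinearMap) =
      (Fintype.card σ + (s + t) - 1).choose (s + t) := by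
  rw [map_mkₐ_bidegPiece, finrank_span_eq_card (linearIndependent_diagonalMonomial s t),
    Sym.card_sym_eq_choose]

end Diagonal

/-- In `R = k[x_0,…,x_m, y_0,…,y_m]` with `I` the ideal generated by the binomials
`x_i y_j - x_j y_i`, the dimension of the bidegree `(s,t)` piece of `R/I` is
`(s+t+m).choose m`. -/
theorem dim_bideg_piece_diagonal (k : Type*) [Field k] (m s t : ℕ)
    (I : Ideal (MvPolynomial (Fin (m + 1) ⊕ Fin (m + 1)) k))
    (hI : I = Ideal.span {f | ∃ i j : Fin (m + 1),
      f = X (Sum.inl i) * X (Sum.inr j) - X (Sum.inl j) * X (Sum.inr i)}) :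
    Module.finrank k ((bidegPiece k (Fin (m + 1)) (Fin (m + 1)) s t).map
      (Ideal.Quotient.mkₐ k I).toLinearMap) = (s + t + m).choose m := by
  subst hI
  rw [← diagonalIdeal, finrank_map_mkₐ_bidegPiece, Fintype.card_fin,
    show m + 1 + (s + t) - 1 = s + t + m by omega, Nat.choose_symm_add]
end

section
/- Let k be a field and p, q, m, s, t natural numbers. In the polynomial ring R = k[x_p,…,x_{m+p+q}, y_0,…,y_{m+p}] (so with m+q+1 variables x_p,…,x_{m+p+q} and m+p+1 variables y_0,…,y_{m+p}), let I be the ideal generated by the binomials x_i·y_j − x_j·y_i for all p ≤ i, j ≤ m+p. Then the k-dimension of the bidegree-(s,t) graded piece of R/I, plus Σ_{ℓ=0}^{m−1} C(s+q+ℓ, q+ℓ)·C(t+p+m−1−ℓ, p+m−1−ℓ), equals Σ_{ℓ=0}^{m} C(s+q+ℓ, q+ℓ)·C(t+p+m−ℓ, p+m−ℓ). (Here C(a,b) denotes the binomial coefficient, and for m = 0 the first sum is empty.) -/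
open MvPolynomial

/-!
Call `x_{ex i}`, `y_{ey i}` (`i ≤ m`) the coupled variables and a monomial *standard* if no
coupled `x_j` occurs in it together with a coupled `y_i` with `i < j`. Modulo the minors every
monomial is congruent to a standard one of the same bidegree: replacing `x_j y_i` by `x_i y_j`
strictly lowers a weight. Standard monomials stay linearly independent in the quotient, because
the substitution `y_{ey i} ↦ x_{ex i}` kills the minors and, on standard monomials of fixed
bidegree, is injective (the `x`'s fill the coupled slots from the left). Finally `d` is standard
iff for some `ℓ` its coupled `x`'s sit at positions `≤ ℓ` and its coupled `y`'s at positions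
`≥ ℓ`; these `ℓ` form an interval, so inclusion–exclusion over single `ℓ` and adjacent pairs
`ℓ, ℓ + 1` counts standard monomials by the two binomial sums.
-/

open Finset

theorem Finsupp.exists_eq_add_single_add_single {α : Type*} {d : α →₀ ℕ} {a b : α} (hab : a ≠ b)
    (ha : d a ≠ 0) (hb : d b ≠ 0) : ∃ e, d = e + single a 1 + single b 1 := by
  classical
  refine ⟨d - single a 1 - single b 1, Finsupp.ext fun v => ?_⟩
  simp only [coe_add, coe_tsub, Pi.add_apply, Pi.sub_apply, single_apply]
  split_ifs <;> subst_vars <;> simp_all <;> omega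

theorem Finsupp.mapDomain_apply_eq_sum_of_fiber {α β : Type*} {f : α → β} (d : α →₀ ℕ) {c : β}
    {S : Finset α} (hS : ∀ v, f v = c ↔ v ∈ S) : mapDomain f d c = ∑ v ∈ S, d v := by
  classical
  induction d using Finsupp.induction_linear with
  | zero => simp
  | add d e hd he => simp [mapDomain_add, hd, he, sum_add_distrib]
  | single a n => simp [mapDomain_single, single_apply, hS]

theorem Fin.card_filter_lt_val (n a : ℕ) : #{j : Fin n | a < (j : ℕ)} = n - (a + 1) := by
  have h := card_filter_add_card_filter_not (s := univ) fun j : Fin n => (j : ℕ) < a + 1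
  simp only [Fin.card_filter_val_lt, not_lt, Nat.succ_le_iff, card_univ, Fintype.card_fin] at h
  omega

theorem Nat.multichoose_succ_eq_choose (n a : ℕ) : (n + 1).multichoose a = (a + n).choose n := by
  rw [Nat.multichoose_eq, show n + 1 + a - 1 = a + n by omega, Nat.choose_symm_add]

/-- Inclusion–exclusion along a chain: when each `{ℓ | P ℓ d}` is an interval, it has one more
point than it has pairs of adjacent points, unless it is empty. -/
theorem card_filter_exists_add_sum_card_filter_and_succ {α : Type*} (E : Finset α)
    (P : ℕ → α → Prop) [∀ ℓ, DecidablePred (P ℓ)]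
    (hP : ∀ d a b c, a ≤ b → b ≤ c → P a d → P c d → P b d) (m : ℕ) :
    #{d ∈ E | ∃ ℓ ≤ m, P ℓ d} + ∑ ℓ ∈ range m, #{d ∈ E | P ℓ d ∧ P (ℓ + 1) d}
      = ∑ ℓ ∈ range (m + 1), #{d ∈ E | P ℓ d} := by
  classical
  induction m with
  | zero => simp
  | succ m ih =>
    have hunion : #{d ∈ E | ∃ ℓ ≤ m + 1, P ℓ d} + #{d ∈ E | P m d ∧ P (m + 1) d}
        = #{d ∈ E | ∃ ℓ ≤ m, P ℓ d} + #{d ∈ E | P (m + 1) d} := by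
      rw [← card_union_add_card_inter _ {d ∈ E | P (m + 1) d}, ← filter_or, ← filter_and]
      congr 2 <;> refine filter_congr fun d _ => ⟨?_, ?_⟩
      · rintro ⟨ℓ, hℓ, h⟩
        exact (Nat.le_succ_iff.1 hℓ).imp (fun hℓ => ⟨ℓ, hℓ, h⟩)
          fun (hℓ : ℓ = m + 1) => hℓ ▸ h
      · rintro (⟨ℓ, hℓ, h⟩ | h)
        exacts [⟨ℓ, hℓ.trans m.le_succ, h⟩, ⟨m + 1, le_rfl, h⟩]
      · exact fun h => ⟨⟨m, le_rfl, h.1⟩, h.2⟩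
      · exact fun ⟨⟨ℓ, hℓ, h⟩, h'⟩ => ⟨hP d ℓ m (m + 1) hℓ m.le_succ h h', h'⟩
    rw [sum_range_succ, sum_range_succ _ (m + 1), ← ih]
    omega

noncomputable section

open scoped Classical

section Bidegree

variable {σ τ : Type*}

def bidegExps (A : Finset σ) (B : Finset τ) (s t : ℕ) : Finset (σ ⊕ τ →₀ ℕ) :=
  (A.finsuppAntidiag s ×ˢ B.finsuppAntidiag t).map
    Finsupp.sumFinsuppEquivProdFinsupp.symm.toEmbedding

theorem card_bidegExps (A : Finset σ) (B : Finset τ) (s t : ℕ) :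
    #(bidegExps A B s t) = (#A).multichoose s * (#B).multichoose t := by
  simp [bidegExps, card_finsuppAntidiag_nat_eq_multichoose]

variable [Fintype σ] [Fintype τ]

def bideg (d : σ ⊕ τ →₀ ℕ) : ℕ × ℕ :=
  (∑ a, d (Sum.inl a), ∑ b, d (Sum.inr b))

@[simp]
theorem bideg_add (d e : σ ⊕ τ →₀ ℕ) : bideg (d + e) = bideg d + bideg e := by
  simp [bideg, sum_add_distrib]

@[simp]
theorem bideg_single_inl (a : σ) :
    bideg (Finsupp.single (Sum.inl a : σ ⊕ τ) 1) = (1, 0) := by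
  simp [bideg, Finsupp.single_apply]

@[simp]
theorem bideg_single_inr (b : τ) :
    bideg (Finsupp.single (Sum.inr b : σ ⊕ τ) 1) = (0, 1) := by
  simp [bideg, Finsupp.single_apply]

theorem bidegPiece_eq_span_monomial (k : Type*) [Field k] (s t : ℕ) :
    bidegPiece k σ τ s t
      = Submodule.span k ((monomial · (1 : k)) '' {d | bideg d = (s, t)}) := by
  refine le_antisymm (Submodule.span_le.2 fun P hP => ?_) (Submodule.span_mono ?_)
  · rw [SetLike.mem_coe, ← support_sum_monomial_coeff P]
    refine Submodule.sum_mem _ fun d hd => ?_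
    rw [← mul_one (coeff d P), ← smul_eq_mul, ← smul_monomial]
    exact Submodule.smul_mem _ _
      (Submodule.subset_span ⟨d, by simpa [bideg] using hP d hd, rfl⟩)
  · rintro _ ⟨d, hd, rfl⟩ e he
    rw [support_monomial, if_neg one_ne_zero, mem_singleton] at he
    simpa [bideg, he] using hd

theorem mem_bidegExps {A : Finset σ} {B : Finset τ} {s t : ℕ} {d : σ ⊕ τ →₀ ℕ} :
    d ∈ bidegExps A B s t ↔
      bideg d = (s, t) ∧ (∀ a ∉ A, d (Sum.inl a) = 0) ∧ ∀ b ∉ B, d (Sum.inr b) = 0 := by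
  simp only [bidegExps, Equiv.symm_symm, mem_map_equiv, mem_product, mem_finsuppAntidiag,
    ← coe_subset, Finsupp.support_subset_iff, mem_coe, Finsupp.sumFinsuppEquivProdFinsupp_apply,
    Finsupp.comapDomain_apply, bideg, Prod.mk.injEq]
  constructor
  · rintro ⟨⟨rfl, hA⟩, rfl, hB⟩
    exact ⟨⟨(sum_subset (subset_univ A) fun a _ => hA a).symm,
      (sum_subset (subset_univ B) fun b _ => hB b).symm⟩, hA, hB⟩
  · rintro ⟨⟨rfl, rfl⟩, hA, hB⟩
    exact ⟨⟨sum_subset (subset_univ A) fun a _ => hA a, hA⟩,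
      sum_subset (subset_univ B) fun b _ => hB b, hB⟩

theorem card_filter_bidegExps_vanishing (A : Finset σ) (B : Finset τ) (s t : ℕ) :
    #{d ∈ bidegExps univ univ s t | (∀ a ∈ A, d (Sum.inl a) = 0) ∧ ∀ b ∈ B, d (Sum.inr b) = 0}
      = (Fintype.card σ - #A).multichoose s * (Fintype.card τ - #B).multichoose t := by
  rw [← card_compl, ← card_compl, ← card_bidegExps]
  congr 1
  ext d
  simp [mem_bidegExps]

end Bidegree

section Straightening

variable (k : Type*) [Field k] {σ τ : Type*} {m : ℕ} (ex : Fin (m + 1) ↪ σ) (ey : Fin (m + 1) ↪ τ)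

def IsStandard (d : σ ⊕ τ →₀ ℕ) : Prop :=
  ∀ i j : Fin (m + 1), i < j → d (Sum.inl (ex j)) = 0 ∨ d (Sum.inr (ey i)) = 0

def straighteningWeight (d : σ ⊕ τ →₀ ℕ) : ℕ :=
  ∑ i : Fin (m + 1), (i * d (Sum.inl (ex i)) + (m - i) * d (Sum.inr (ey i)))

theorem straighteningWeight_swap_lt (e : σ ⊕ τ →₀ ℕ) {i j : Fin (m + 1)} (hij : i < j) :
    straighteningWeight ex ey
        (e + Finsupp.single (Sum.inl (ex i)) 1 + Finsupp.single (Sum.inr (ey j)) 1)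
      < straighteningWeight ex ey
        (e + Finsupp.single (Sum.inl (ex j)) 1 + Finsupp.single (Sum.inr (ey i)) 1) := by
  simp only [straighteningWeight, Finsupp.coe_add, Pi.add_apply, Finsupp.single_apply, mul_add,
    sum_add_distrib, Sum.inl.injEq, Sum.inr.injEq, reduceCtorEq, EmbeddingLike.apply_eq_iff_eq,
    mul_ite, mul_one, mul_zero, sum_ite_eq, mem_univ, if_true]
  omega

def minorsIdeal : Ideal (MvPolynomial (σ ⊕ τ) k) :=
  Ideal.span {f | ∃ i j : Fin (m + 1), f = X (Sum.inl (ex i)) * X (Sum.inr (ey j))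
    - X (Sum.inl (ex j)) * X (Sum.inr (ey i))}

theorem monomial_swap_sub_mem_minorsIdeal (e : σ ⊕ τ →₀ ℕ) (i j : Fin (m + 1)) :
    monomial (e + Finsupp.single (Sum.inl (ex j)) 1 + Finsupp.single (Sum.inr (ey i)) 1) (1 : k)
      - monomial (e + Finsupp.single (Sum.inl (ex i)) 1 + Finsupp.single (Sum.inr (ey j)) 1) 1
      ∈ minorsIdeal k ex ey := by
  have hminor : X (Sum.inl (ex j)) * X (Sum.inr (ey i)) - X (Sum.inl (ex i)) * X (Sum.inr (ey j))
      ∈ minorsIdeal k ex ey := Ideal.subset_span ⟨j, i, rfl⟩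
  convert (minorsIdeal k ex ey).mul_mem_left (monomial e 1) hminor using 1
  simp only [X, monomial_mul, mul_one, mul_sub, add_assoc]

theorem exists_isStandard_monomial_sub_mem [Fintype σ] [Fintype τ] (d : σ ⊕ τ →₀ ℕ) :
    ∃ d', IsStandard ex ey d' ∧ bideg d' = bideg d
      ∧ monomial d (1 : k) - monomial d' 1 ∈ minorsIdeal k ex ey := by
  induction hw : straighteningWeight ex ey d using Nat.strong_induction_on generalizing d with
  | _ w ih =>
    by_cases hd : IsStandard ex ey d
    · exact ⟨d, hd, rfl, by simp⟩
    obtain ⟨i, j, hij, hj, hi⟩ :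
        ∃ i j, i < j ∧ d (Sum.inl (ex j)) ≠ 0 ∧ d (Sum.inr (ey i)) ≠ 0 := by
      simpa [IsStandard] using hd
    obtain ⟨e, rfl⟩ := Finsupp.exists_eq_add_single_add_single Sum.inl_ne_inr hj hi
    obtain ⟨d', hd', hdeg, hmem⟩ := ih _ (hw ▸ straighteningWeight_swap_lt ex ey e hij) _ rfl
    refine ⟨d', hd', by simp [hdeg], ?_⟩
    simpa using add_mem (monomial_swap_sub_mem_minorsIdeal k ex ey e i j) hmem

end Straightening

section Collapse

variable {σ τ : Type*} {m : ℕ} (ex : Fin (m + 1) ↪ σ) (ey : Fin (m + 1) ↪ τ)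

/-- Sends `y_{ey i}` to `x_{ex i}` and fixes every other variable. -/
def collapse : σ ⊕ τ → σ ⊕ τ :=
  Sum.elim Sum.inl (Function.extend ey (Sum.inl ∘ ex) Sum.inr)

@[simp]
theorem collapse_inl (a : σ) : collapse ex ey (Sum.inl a) = Sum.inl a := rfl

@[simp]
theorem collapse_inr_ey (i : Fin (m + 1)) : collapse ex ey (Sum.inr (ey i)) = Sum.inl (ex i) :=
  ey.injective.extend_apply _ _ i

theorem collapse_inr_of_notMem_range {b : τ} (hb : b ∉ Set.range ey) :
    collapse ex ey (Sum.inr b) = Sum.inr b :=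
  Function.extend_apply' _ _ b hb

theorem collapse_inr_eq_inl_iff {b : τ} {a : σ} :
    collapse ex ey (Sum.inr b) = Sum.inl a ↔ ∃ i, ey i = b ∧ ex i = a := by
  by_cases hb : b ∈ Set.range ey
  · obtain ⟨j, rfl⟩ := hb
    simp
  · simp only [collapse_inr_of_notMem_range ex ey hb, reduceCtorEq, false_iff]
    exact fun ⟨i, hi, _⟩ => hb ⟨i, hi⟩

theorem collapse_inr_eq_inr_iff {b b' : τ} :
    collapse ex ey (Sum.inr b) = Sum.inr b' ↔ b = b' ∧ b ∉ Set.range ey := by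
  by_cases hb : b ∈ Set.range ey
  · obtain ⟨j, rfl⟩ := hb
    simp
  · simp [collapse_inr_of_notMem_range ex ey hb, hb]

theorem mapDomain_collapse_inl_ex (d : σ ⊕ τ →₀ ℕ) (i : Fin (m + 1)) :
    d.mapDomain (collapse ex ey) (Sum.inl (ex i)) = d (Sum.inl (ex i)) + d (Sum.inr (ey i)) := by
  rw [Finsupp.mapDomain_apply_eq_sum_of_fiber d (S := {Sum.inl (ex i), Sum.inr (ey i)}),
    sum_pair Sum.inl_ne_inr]
  rintro (a | b) <;> simp [collapse_inr_eq_inl_iff, eq_comm]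

theorem mapDomain_collapse_inl_of_notMem_range (d : σ ⊕ τ →₀ ℕ) {a : σ}
    (ha : a ∉ Set.range ex) : d.mapDomain (collapse ex ey) (Sum.inl a) = d (Sum.inl a) := by
  rw [Finsupp.mapDomain_apply_eq_sum_of_fiber d (S := {Sum.inl a}), sum_singleton]
  rintro (a' | b) <;> simp_all [collapse_inr_eq_inl_iff]

theorem mapDomain_collapse_inr_of_notMem_range (d : σ ⊕ τ →₀ ℕ) {b : τ}
    (hb : b ∉ Set.range ey) : d.mapDomain (collapse ex ey) (Sum.inr b) = d (Sum.inr b) := by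
  rw [Finsupp.mapDomain_apply_eq_sum_of_fiber d (S := {Sum.inr b}), sum_singleton]
  rintro (a | b') <;> simp_all [collapse_inr_eq_inr_iff]

end Collapse

section Independence

variable {σ τ : Type*} {m : ℕ} {ex : Fin (m + 1) ↪ σ} {ey : Fin (m + 1) ↪ τ}

/-- The coupled `x`'s of a standard exponent fill the coupled slots from the left. -/
theorem IsStandard.apply_inl_eq_min {d : σ ⊕ τ →₀ ℕ} (hd : IsStandard ex ey d)
    (i : Fin (m + 1)) :
    d (Sum.inl (ex i)) = min (d (Sum.inl (ex i)) + d (Sum.inr (ey i)))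
      ((∑ r, d (Sum.inl (ex r))) - ∑ r ∈ Iio i, (d (Sum.inl (ex r)) + d (Sum.inr (ey r)))) := by
  have hsplit : ∑ r, d (Sum.inl (ex r)) = ∑ r ∈ Iio i, d (Sum.inl (ex r)) + d (Sum.inl (ex i))
      + ∑ r ∈ Ioi i, d (Sum.inl (ex r)) := by
    rw [← sum_filter_add_sum_filter_not univ (· < i), filter_gt_eq_Iio, add_assoc]
    simp only [not_lt, filter_le_eq_Ici, ← Ioi_insert, sum_insert notMem_Ioi_self]
  have hright : ∑ r ∈ Ioi i, d (Sum.inl (ex r)) ≠ 0 →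
      d (Sum.inr (ey i)) = 0 ∧ ∑ r ∈ Iio i, d (Sum.inr (ey r)) = 0 := by
    intro h
    obtain ⟨j, hij, hj⟩ := exists_ne_zero_of_sum_ne_zero h
    rw [mem_Ioi] at hij
    refine ⟨(hd i j hij).resolve_left hj, sum_eq_zero fun r hr => ?_⟩
    exact (hd r j ((mem_Iio.1 hr).trans hij)).resolve_left hj
  have hself : d (Sum.inl (ex i)) ≠ 0 → ∑ r ∈ Iio i, d (Sum.inr (ey r)) = 0 :=
    fun h => sum_eq_zero fun r hr => (hd r i (mem_Iio.1 hr)).resolve_left h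
  rw [sum_add_distrib]
  omega

theorem IsStandard.eq_of_mapDomain_collapse_eq [Fintype σ] {d d' : σ ⊕ τ →₀ ℕ}
    (hd : IsStandard ex ey d) (hd' : IsStandard ex ey d')
    (hdeg : ∑ a, d (Sum.inl a) = ∑ a, d' (Sum.inl a))
    (h : d.mapDomain (collapse ex ey) = d'.mapDomain (collapse ex ey)) : d = d' := by
  have hmerged (i : Fin (m + 1)) :
      d (Sum.inl (ex i)) + d (Sum.inr (ey i)) = d' (Sum.inl (ex i)) + d' (Sum.inr (ey i)) := by
    rw [← mapDomain_collapse_inl_ex, ← mapDomain_collapse_inl_ex, h]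
  have hfree_inl {a : σ} (ha : a ∉ Set.range ex) : d (Sum.inl a) = d' (Sum.inl a) := by
    rw [← mapDomain_collapse_inl_of_notMem_range ex ey d ha,
      ← mapDomain_collapse_inl_of_notMem_range ex ey d' ha, h]
  have hfree_inr {b : τ} (hb : b ∉ Set.range ey) : d (Sum.inr b) = d' (Sum.inr b) := by
    rw [← mapDomain_collapse_inr_of_notMem_range ex ey d hb,
      ← mapDomain_collapse_inr_of_notMem_range ex ey d' hb, h]
  have hcoupled : ∑ r, d (Sum.inl (ex r)) = ∑ r, d' (Sum.inl (ex r)) := by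
    have hsplit (e : σ ⊕ τ →₀ ℕ) : ∑ a, e (Sum.inl a)
        = ∑ r, e (Sum.inl (ex r)) + ∑ a ∈ (univ.map ex)ᶜ, e (Sum.inl a) := by
      rw [← sum_add_sum_compl (univ.map ex), sum_map]
    have hrest : ∑ a ∈ (univ.map ex)ᶜ, d (Sum.inl a) = ∑ a ∈ (univ.map ex)ᶜ, d' (Sum.inl a) :=
      sum_congr rfl fun a ha => hfree_inl (by simpa using ha)
    rw [hsplit d, hsplit d', hrest] at hdeg
    omega
  have hx (i : Fin (m + 1)) : d (Sum.inl (ex i)) = d' (Sum.inl (ex i)) := by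
    rw [hd.apply_inl_eq_min, hd'.apply_inl_eq_min, hmerged, hcoupled,
      sum_congr rfl fun r _ => hmerged r]
  ext (a | b)
  · by_cases ha : a ∈ Set.range ex
    · obtain ⟨i, rfl⟩ := ha
      exact hx i
    · exact hfree_inl ha
  · by_cases hb : b ∈ Set.range ey
    · obtain ⟨i, rfl⟩ := hb
      have := hmerged i
      have := hx i
      omega
    · exact hfree_inr hb

end Independence

section Basis

variable (k : Type*) [Field k] {σ τ : Type*} [Fintype σ] [Fintype τ] {m : ℕ}
  (ex : Fin (m + 1) ↪ σ) (ey : Fin (m + 1) ↪ τ) (s t : ℕ)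

def standardExps : Finset (σ ⊕ τ →₀ ℕ) :=
  {d ∈ bidegExps univ univ s t | IsStandard ex ey d}

theorem mem_standardExps {d : σ ⊕ τ →₀ ℕ} :
    d ∈ standardExps ex ey s t ↔ bideg d = (s, t) ∧ IsStandard ex ey d := by
  simp [standardExps, mem_bidegExps]

theorem map_bidegPiece_eq_span_standard :
    (bidegPiece k σ τ s t).map (Ideal.Quotient.mkₐ k (minorsIdeal k ex ey)).toLinearMap
      = Submodule.span k (Set.range fun d : standardExps ex ey s t =>
          Ideal.Quotient.mk (minorsIdeal k ex ey) (monomial d.1 1)) := by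
  rw [bidegPiece_eq_span_monomial, Submodule.map_span, Set.image_image]
  refine le_antisymm (Submodule.span_le.2 ?_) (Submodule.span_le.2 ?_)
  · rintro _ ⟨d, hd, rfl⟩
    obtain ⟨d', hd', hdeg, hmem⟩ := exists_isStandard_monomial_sub_mem k ex ey d
    refine Submodule.subset_span ⟨⟨d', (mem_standardExps ex ey s t).2 ⟨hdeg.trans hd, hd'⟩⟩, ?_⟩
    exact (Ideal.Quotient.eq.2 hmem).symm
  · rintro _ ⟨⟨d, hd⟩, rfl⟩
    exact Submodule.subset_span ⟨d, ((mem_standardExps ex ey s t).1 hd).1, rfl⟩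

theorem linearIndependent_mk_monomial_standard :
    LinearIndependent k fun d : standardExps ex ey s t =>
      Ideal.Quotient.mk (minorsIdeal k ex ey) (monomial d.1 (1 : k)) := by
  have hker : ∀ f ∈ minorsIdeal k ex ey, rename (R := k) (collapse ex ey) f = 0 := by
    refine fun f hf => (Ideal.span_le (I := RingHom.ker (rename (collapse ex ey)))).2 ?_ hf
    rintro _ ⟨i, j, rfl⟩
    simp only [SetLike.mem_coe, RingHom.mem_ker, map_sub, map_mul, rename_X, collapse_inl,
      collapse_inr_ey]
    ring
  let φ := Ideal.Quotient.liftₐ (minorsIdeal k ex ey) (rename (collapse ex ey)) hker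
  apply LinearIndependent.of_comp φ.toLinearMap
  have hφ : φ.toLinearMap ∘ (fun d : standardExps ex ey s t =>
      Ideal.Quotient.mk (minorsIdeal k ex ey) (monomial d.1 (1 : k)))
      = basisMonomials (σ ⊕ τ) k ∘ fun d => d.1.mapDomain (collapse ex ey) := by
    funext d
    change rename (collapse ex ey) (monomial d.1 1) = _
    rw [rename_monomial, coe_basisMonomials]
    rfl
  rw [hφ]
  refine (basisMonomials (σ ⊕ τ) k).linearIndependent.comp _ fun d d' h => Subtype.ext ?_
  obtain ⟨hdeg, hd⟩ := (mem_standardExps ex ey s t).1 d.2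
  obtain ⟨hdeg', hd'⟩ := (mem_standardExps ex ey s t).1 d'.2
  exact hd.eq_of_mapDomain_collapse_eq hd' (congrArg Prod.fst (hdeg.trans hdeg'.symm)) h

theorem finrank_map_bidegPiece_eq_card_standardExps :
    Module.finrank k ((bidegPiece k σ τ s t).map
        (Ideal.Quotient.mkₐ k (minorsIdeal k ex ey)).toLinearMap)
      = #(standardExps ex ey s t) := by
  rw [map_bidegPiece_eq_span_standard,
    finrank_span_eq_card (linearIndependent_mk_monomial_standard k ex ey s t), Fintype.card_coe]

end Basis

section Counting

variable {σ τ : Type*} {m : ℕ} (ex : Fin (m + 1) ↪ σ) (ey : Fin (m + 1) ↪ τ)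

def IsSplitAt (a b : ℕ) (d : σ ⊕ τ →₀ ℕ) : Prop :=
  (∀ j : Fin (m + 1), a < j → d (Sum.inl (ex j)) = 0) ∧
    ∀ i : Fin (m + 1), (i : ℕ) < b → d (Sum.inr (ey i)) = 0

theorem isStandard_iff_exists_isSplitAt {d : σ ⊕ τ →₀ ℕ} :
    IsStandard ex ey d ↔ ∃ ℓ ≤ m, IsSplitAt ex ey ℓ ℓ d := by
  constructor
  · intro hd
    have htop : ∀ j : Fin (m + 1), m < j → d (Sum.inl (ex j)) = 0 :=
      fun j hj => absurd j.is_le hj.not_ge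
    have hm : ∃ ℓ : ℕ, ∀ j : Fin (m + 1), ℓ < j → d (Sum.inl (ex j)) = 0 := ⟨m, htop⟩
    refine ⟨Nat.find hm, Nat.find_min' hm htop, Nat.find_spec hm, fun i hi => ?_⟩
    obtain ⟨j, hij, hj⟩ : ∃ j : Fin (m + 1), (i : ℕ) < j ∧ d (Sum.inl (ex j)) ≠ 0 := by
      simpa using Nat.find_min hm hi
    exact (hd i j hij).resolve_left hj
  · rintro ⟨ℓ, -, hx, hy⟩ i j hij
    by_cases hj : (j : ℕ) ≤ ℓ
    · exact .inr (hy i (lt_of_lt_of_le hij hj))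
    · exact .inl (hx j (not_le.1 hj))

theorem IsSplitAt.of_le_of_le {d : σ ⊕ τ →₀ ℕ} {a b c : ℕ} (hab : a ≤ b) (hbc : b ≤ c)
    (ha : IsSplitAt ex ey a a d) (hc : IsSplitAt ex ey c c d) : IsSplitAt ex ey b b d :=
  ⟨fun j hj => ha.1 j (hab.trans_lt hj), fun i hi => hc.2 i (hi.trans_le hbc)⟩

theorem isSplitAt_and_isSplitAt_succ {d : σ ⊕ τ →₀ ℕ} {ℓ : ℕ} :
    IsSplitAt ex ey ℓ ℓ d ∧ IsSplitAt ex ey (ℓ + 1) (ℓ + 1) d ↔ IsSplitAt ex ey ℓ (ℓ + 1) d :=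
  ⟨fun h => ⟨h.1.1, h.2.2⟩, fun h => ⟨⟨h.1, fun i hi => h.2 i (hi.trans ℓ.lt_succ_self)⟩,
    ⟨fun j hj => h.1 j (ℓ.lt_succ_self.trans hj), h.2⟩⟩⟩

variable [Fintype σ] [Fintype τ]

theorem card_filter_isSplitAt (a b s t : ℕ) :
    #{d ∈ bidegExps univ univ s t | IsSplitAt ex ey a b d}
      = (Fintype.card σ - (m - a)).multichoose s
        * (Fintype.card τ - min (m + 1) b).multichoose t := by
  have h := card_filter_bidegExps_vanishing
    (({j | a < (j : ℕ)} : Finset (Fin (m + 1))).map ex)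
    (({i | (i : ℕ) < b} : Finset (Fin (m + 1))).map ey) s t
  simp only [card_map, Fin.card_filter_lt_val, Fin.card_filter_val_lt] at h
  rw [show m + 1 - (a + 1) = m - a by omega] at h
  rw [← h]
  congr 1
  refine filter_congr fun d _ => ?_
  simp [IsSplitAt]

theorem card_standardExps_add_sum (s t : ℕ) :
    #(standardExps ex ey s t) + ∑ ℓ ∈ range m,
        (Fintype.card σ - (m - ℓ)).multichoose s * (Fintype.card τ - (ℓ + 1)).multichoose t
      = ∑ ℓ ∈ range (m + 1),
        (Fintype.card σ - (m - ℓ)).multichoose s * (Fintype.card τ - ℓ).multichoose t := by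
  have h := card_filter_exists_add_sum_card_filter_and_succ (bidegExps univ univ s t)
    (fun ℓ => IsSplitAt ex ey ℓ ℓ) (fun d a b c hab hbc => IsSplitAt.of_le_of_le ex ey hab hbc) m
  simp only [isSplitAt_and_isSplitAt_succ, card_filter_isSplitAt] at h
  rw [standardExps, filter_congr fun d _ => isStandard_iff_exists_isSplitAt ex ey]
  convert h using 2 with ℓ hℓ
  · refine sum_congr rfl fun ℓ hℓ => ?_
    rw [min_eq_right (by simp at hℓ; omega)]
  · rw [min_eq_right (by simp at hℓ; omega)]

end Counting

end

/-- Here `x_{p+a}` is `Sum.inl a` and `y_b` is `Sum.inr b`, so the coupled variables are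
`Sum.inl i` and `Sum.inr (p + i)` for `i ≤ m`. -/
theorem dim_bideg_piece_determinantal (k : Type*) [Field k] (p q m s t : ℕ)
    (I : Ideal (MvPolynomial (Fin (m + q + 1) ⊕ Fin (m + p + 1)) k))
    (hI : I = Ideal.span {f | ∃ i j : Fin (m + 1),
      f = X (Sum.inl ⟨(i : ℕ), by have := i.isLt; omega⟩)
            * X (Sum.inr ⟨p + (j : ℕ), by have := j.isLt; omega⟩)
          - X (Sum.inl ⟨(j : ℕ), by have := j.isLt; omega⟩)
            * X (Sum.inr ⟨p + (i : ℕ), by have := i.isLt; omega⟩)}) :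
    Module.finrank k ((bidegPiece k (Fin (m + q + 1)) (Fin (m + p + 1)) s t).map
        (Ideal.Quotient.mkₐ k I).toLinearMap)
      + ∑ ℓ ∈ Finset.range m,
          (s + q + ℓ).choose (q + ℓ) * (t + (p + m - 1 - ℓ)).choose (p + m - 1 - ℓ)
      = ∑ ℓ ∈ Finset.range (m + 1),
          (s + q + ℓ).choose (q + ℓ) * (t + (p + m - ℓ)).choose (p + m - ℓ) := by
  let ex : Fin (m + 1) ↪ Fin (m + q + 1) := Fin.castLEEmb (by omega)
  let ey : Fin (m + 1) ↪ Fin (m + p + 1) :=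
    ⟨fun i => ⟨p + i, by omega⟩, fun i j h => Fin.ext (by simpa using h)⟩
  have hminors : I = minorsIdeal k ex ey := hI
  have hcount := card_standardExps_add_sum ex ey s t
  simp only [Fintype.card_fin] at hcount
  rw [hminors, finrank_map_bidegPiece_eq_card_standardExps]
  convert hcount using 2 with ℓ hℓ
  · refine sum_congr rfl fun ℓ hℓ => ?_
    rw [mem_range] at hℓ
    rw [show m + q + 1 - (m - ℓ) = q + ℓ + 1 by omega,
      show m + p + 1 - (ℓ + 1) = p + m - 1 - ℓ + 1 by omega,
      Nat.multichoose_succ_eq_choose, Nat.multichoose_succ_eq_choose, add_assoc]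
  · rw [mem_range] at hℓ
    rw [show m + q + 1 - (m - ℓ) = q + ℓ + 1 by omega, show m + p + 1 - ℓ = p + m - ℓ + 1 by omega,
      Nat.multichoose_succ_eq_choose, Nat.multichoose_succ_eq_choose, add_assoc]
end

section
/- Let p, q, m, s, t be natural numbers. The number of functions f from the disjoint union (Fin q) ⊕ (Fin p) ⊕ (Fin (m+1)) to ℕ such that the total sum of the values of f equals s+t, the sum of the values of f over the Fin q summand is at most s, and the sum of the values of f over the Fin p summand is at most t, when added to Σ_{ℓ=0}^{m−1} C(s+q+ℓ, q+ℓ)·C(t+p+m−1−ℓ, p+m−1−ℓ), equals Σ_{ℓ=0}^{m} C(s+q+ℓ, q+ℓ)·C(t+p+m−ℓ, p+m−ℓ). (For m = 0 the first sum is empty.) -/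
/-!
Split the monomials according to whether the `x`-degree plus the degree in the first
`z`-variable `z₀` is at most `s`. If it is, `z₀` can be regarded as an extra `x`-variable,
which gives the same count for `q + 1` variables `x` and `m` variables `z`. If it is not, `z₀`
is the slack of the total degree, so it is determined by the other exponents, and these are
exactly an `x`-part of degree `≤ s` and a `(y, z)`-part of degree `< t`:
`C(s+q, q) * C(t+p+m-1, p+m)` monomials. Starting from `C(s+q, q) * C(t+p, p)` for a single
`z`-variable (again the slack), induction on `m` and Pascal's rule give the identity.
-/

open Finset

namespace MonomialCount

section SumsOfExponents

variable {ι : Type*} [Fintype ι]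

theorem finite_sum_eq (n : ℕ) : {g : ι → ℕ | ∑ i, g i = n}.Finite := by
  classical exact Set.finite_coe_iff.mp (.of_equiv _ (Sym.equivNatSumOfFintype ι n))

theorem card_sum_eq (n : ℕ) :
    Nat.card {g : ι → ℕ // ∑ i, g i = n} = (Fintype.card ι + n - 1).choose n := by
  classical
  rw [← Nat.card_congr (Sym.equivNatSumOfFintype ι n), Nat.card_eq_fintype_card,
    Sym.card_sym_eq_choose]

def optionSumEqEquiv (n : ℕ) (P : (ι → ℕ) → Prop) :
    {g : Option ι → ℕ // ∑ i, g i = n ∧ P (g ∘ some)} ≃ {g : ι → ℕ // ∑ i, g i ≤ n ∧ P g} where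
  toFun g := ⟨g.1 ∘ some,
    (Nat.le_add_left _ (g.1 none)).trans_eq ((Fintype.sum_option g.1).symm.trans g.2.1), g.2.2⟩
  invFun g := ⟨fun o => o.elim (n - ∑ i, g.1 i) g.1,
    (Fintype.sum_option _).trans (Nat.sub_add_cancel g.2.1), g.2.2⟩
  left_inv := by
    rintro ⟨g, hsum, -⟩
    rw [Fintype.sum_option] at hsum
    ext (_ | i)
    · exact Nat.sub_eq_of_eq_add hsum.symm
    · rfl
  right_inv g := rfl

theorem card_sum_le (n : ℕ) :
    Nat.card {g : ι → ℕ // ∑ i, g i ≤ n} = (n + Fintype.card ι).choose (Fintype.card ι) := by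
  have := Nat.card_congr (optionSumEqEquiv (ι := ι) n fun _ => True)
  simp only [and_true] at this
  rw [← this, card_sum_eq, Fintype.card_option,
    show Fintype.card ι + 1 + n - 1 = n + Fintype.card ι by omega, Nat.choose_symm_add]

theorem card_sum_lt [Nonempty ι] (n : ℕ) :
    Nat.card {g : ι → ℕ // ∑ i, g i < n} = (n + Fintype.card ι - 1).choose (Fintype.card ι) := by
  cases n with
  | zero =>
    simp [Nat.choose_eq_zero_of_lt, Fintype.card_pos]
  | succ n =>
    simp only [Nat.lt_succ_iff, card_sum_le]
    congr 1; omega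

theorem card_sum_arrow_subtype {α δ M : Type*} (P : (α → M) → Prop) (R : (δ → M) → Prop) :
    Nat.card {g : α ⊕ δ → M // P (g ∘ .inl) ∧ R (g ∘ .inr)} =
      Nat.card {x // P x} * Nat.card {w // R w} := by
  rw [← Nat.card_prod]
  exact Nat.card_congr <| ((Equiv.sumArrowEquivProdArrow _ _ _).subtypeEquiv fun _ => Iff.rfl).trans
    Equiv.subtypeProdEquivProd

end SumsOfExponents

section BoundedMonomials

variable (α β γ : Type*) [Fintype α] [Fintype β] [Fintype γ] (s t : ℕ)

def boundedMonomials : Set (α ⊕ β ⊕ γ → ℕ) :=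
  {f | ∑ x, f x = s + t ∧ ∑ i, f (.inl i) ≤ s ∧ ∑ j, f (.inr (.inl j)) ≤ t}

theorem finite_boundedMonomials : (boundedMonomials α β γ s t).Finite :=
  (finite_sum_eq (s + t)).subset fun _ hf => hf.1

variable {α γ} in
theorem ncard_boundedMonomials_congr {α' γ' : Type*} [Fintype α'] [Fintype γ'] (eα : α ≃ α')
    (eγ : γ ≃ γ') :
    (boundedMonomials α β γ s t).ncard = (boundedMonomials α' β γ' s t).ncard :=
  Nat.card_congr <| Equiv.subtypeEquiv
    ((eα.sumCongr ((Equiv.refl β).sumCongr eγ)).arrowCongr (Equiv.refl ℕ)) fun f => by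
      simp [boundedMonomials, Equiv.sum_comp eα.symm fun a => f (.inl a),
        Equiv.sum_comp eγ.symm fun c => f (.inr (.inr c))]

def sumSumOptionEquivOption : α ⊕ β ⊕ Option γ ≃ Option (α ⊕ β ⊕ γ) where
  toFun
    | .inl a => some (.inl a)
    | .inr (.inl b) => some (.inr (.inl b))
    | .inr (.inr none) => none
    | .inr (.inr (some c)) => some (.inr (.inr c))
  invFun o := o.elim (.inr (.inr none)) (Sum.map id (Sum.map id some))
  left_inv := by rintro (a | b | (_ | c)) <;> rfl
  right_inv := by rintro (_ | (a | b | c)) <;> rfl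

def sumSumOptionEquivOptionSum : α ⊕ β ⊕ Option γ ≃ Option α ⊕ β ⊕ γ where
  toFun
    | .inl a => .inl (some a)
    | .inr (.inl b) => .inr (.inl b)
    | .inr (.inr none) => .inl none
    | .inr (.inr (some c)) => .inr (.inr c)
  invFun
    | .inl (some a) => .inl a
    | .inr (.inl b) => .inr (.inl b)
    | .inl none => .inr (.inr none)
    | .inr (.inr c) => .inr (.inr (some c))
  left_inv := by rintro (a | b | (_ | c)) <;> rfl
  right_inv := by rintro ((_ | a) | b | c) <;> rfl

/-- The monomials in which `z₀` can be counted as one more `x`-variable. -/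
def mergeable : Set (α ⊕ β ⊕ Option γ → ℕ) :=
  {f | ∑ i, f (.inl i) + f (.inr (.inr none)) ≤ s}

variable {α β γ} in
theorem ncard_eq_card_of_slack {S : Set (α ⊕ β ⊕ Option γ → ℕ)} {n : ℕ} {P : (α ⊕ β ⊕ γ → ℕ) → Prop}
    (hP : ∀ w, P w → ∑ x, w x ≤ n)
    (hS : ∀ f, f ∈ S ↔ ∑ x, f x = n ∧ P (f ∘ Sum.map id (Sum.map id some))) :
    S.ncard = Nat.card {w // P w} := by
  refine Nat.card_congr <|
    (Equiv.subtypeEquiv ((sumSumOptionEquivOption α β γ).arrowCongr (.refl ℕ)) ?_).trans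
    ((optionSumEqEquiv n P).trans (Equiv.subtypeEquivRight fun w => and_iff_right_of_imp (hP w)))
  intro f
  rw [hS]
  exact and_congr (by rw [← Equiv.sum_comp (sumSumOptionEquivOption α β γ).symm f]; rfl) Iff.rfl

theorem ncard_boundedMonomials_option_of_isEmpty [IsEmpty γ] :
    (boundedMonomials α β (Option γ) s t).ncard =
      (s + Fintype.card α).choose (Fintype.card α) *
        (t + Fintype.card β).choose (Fintype.card β) := by
  rw [ncard_eq_card_of_slack (n := s + t) (P := fun w => ∑ i, w (.inl i) ≤ s ∧ ∑ j, w (.inr j) ≤ t)]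
  · refine (card_sum_arrow_subtype (fun x => ∑ i, x i ≤ s) fun w => ∑ j, w j ≤ t).trans ?_
    rw [card_sum_le, card_sum_le, Fintype.card_sum, Fintype.card_eq_zero (α := γ), add_zero]
  · rintro w ⟨hα, hβ⟩
    rw [Fintype.sum_sum_type]
    omega
  · intro f
    simp [boundedMonomials, Fintype.sum_sum_type]

theorem ncard_boundedMonomials_option_diff_mergeable :
    (boundedMonomials α β (Option γ) s t \ mergeable α β γ s).ncard =
      (s + Fintype.card α).choose (Fintype.card α) * Nat.card {w : β ⊕ γ → ℕ // ∑ j, w j < t} := by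
  rw [ncard_eq_card_of_slack (n := s + t) (P := fun w => ∑ i, w (.inl i) ≤ s ∧ ∑ j, w (.inr j) < t)]
  · refine (card_sum_arrow_subtype (fun x => ∑ i, x i ≤ s) fun w => ∑ j, w j < t).trans ?_
    rw [card_sum_le]
  · rintro w ⟨hα, hβ⟩
    rw [Fintype.sum_sum_type]
    omega
  · intro f
    simp only [boundedMonomials, mergeable, Fintype.sum_sum_type, Fintype.sum_option,
      Set.mem_sdiff, Set.mem_ofPred_eq, not_le, Function.comp_apply, Sum.map_inl, Sum.map_inr,
      id_eq]
    omega

theorem ncard_boundedMonomials_option_inter_mergeable :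
    (boundedMonomials α β (Option γ) s t ∩ mergeable α β γ s).ncard =
      (boundedMonomials (Option α) β γ s t).ncard := by
  refine Nat.card_congr <|
    Equiv.subtypeEquiv ((sumSumOptionEquivOptionSum α β γ).arrowCongr (.refl ℕ)) fun f => ?_
  simp only [boundedMonomials, mergeable, Fintype.sum_sum_type, Fintype.sum_option,
    Set.mem_inter_iff, Set.mem_ofPred_eq, sumSumOptionEquivOptionSum, Equiv.arrowCongr_apply,
    Equiv.coe_refl, Equiv.symm_mk, Equiv.coe_fn_mk, Function.comp_apply, id_eq]
  omega

theorem ncard_boundedMonomials_option [Nonempty (β ⊕ γ)] :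
    (boundedMonomials α β (Option γ) s t).ncard =
      (boundedMonomials (Option α) β γ s t).ncard +
        (s + Fintype.card α).choose (Fintype.card α) *
          (t + (Fintype.card β + Fintype.card γ) - 1).choose (Fintype.card β + Fintype.card γ) := by
  rw [← Set.ncard_inter_add_ncard_sdiff_eq_ncard _ (mergeable α β γ s)
      (finite_boundedMonomials ..),
    ncard_boundedMonomials_option_inter_mergeable, ncard_boundedMonomials_option_diff_mergeable,
    card_sum_lt, Fintype.card_sum]

end BoundedMonomials

def choosePair (s t a b : ℕ) : ℕ :=
  (s + a).choose a * (t + b).choose b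

theorem sum_range_succ_shift (g : ℕ → ℕ → ℕ) (q n k : ℕ) :
    ∑ ℓ ∈ range (k + 1), g (q + ℓ) (n - ℓ) = g q n + ∑ ℓ ∈ range k, g (q + 1 + ℓ) (n - 1 - ℓ) := by
  rw [sum_range_succ', add_comm]
  simp only [add_zero, Nat.sub_zero, Nat.sub_sub, add_assoc, add_comm 1]

theorem choosePair_succ_right (s t a b : ℕ) :
    choosePair s t a (b + 1) = choosePair s t a b + (s + a).choose a * (t + b).choose (b + 1) := by
  rw [choosePair, choosePair, ← add_assoc, Nat.choose_succ_succ', mul_add]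

theorem ncard_boundedMonomials_fin (p s t m q : ℕ) :
    (boundedMonomials (Fin q) (Fin p) (Fin (m + 1)) s t).ncard +
        ∑ ℓ ∈ range m, choosePair s t (q + ℓ) (p + m - 1 - ℓ) =
      ∑ ℓ ∈ range (m + 1), choosePair s t (q + ℓ) (p + m - ℓ) := by
  induction m generalizing q with
  | zero =>
    rw [ncard_boundedMonomials_congr _ _ _ (.refl _) (finSuccEquiv 0),
      ncard_boundedMonomials_option_of_isEmpty]
    simp [choosePair]
  | succ m ih =>
    have hstep : (boundedMonomials (Fin q) (Fin p) (Fin (m + 2)) s t).ncard =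
        (boundedMonomials (Fin (q + 1)) (Fin p) (Fin (m + 1)) s t).ncard +
          (s + q).choose q * (t + (p + m)).choose (p + m + 1) := by
      rw [ncard_boundedMonomials_congr _ _ _ (.refl _) (finSuccEquiv (m + 1)),
        ncard_boundedMonomials_option,
        ncard_boundedMonomials_congr _ _ _ (finSuccEquiv q).symm (.refl _)]
      simp only [Fintype.card_fin, ← add_assoc, Nat.add_sub_cancel]
    rw [sum_range_succ_shift, sum_range_succ_shift, hstep,
      show p + (m + 1) - 1 = p + m by omega, ← ih (q + 1),
      show p + (m + 1) = p + m + 1 by omega, choosePair_succ_right]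
    ring

end MonomialCount

open MonomialCount in
/-- The number of monomials of total degree `s+t` in `q` variables `x`, `p` variables `y`
and `m+1` variables `z`, whose total degree in the `x`-variables is at most `s` and whose
total degree in the `y`-variables is at most `t`, added to
`Σ_{ℓ=0}^{m−1} C(s+q+ℓ, q+ℓ)·C(t+p+m−1−ℓ, p+m−1−ℓ)`, equals
`Σ_{ℓ=0}^{m} C(s+q+ℓ, q+ℓ)·C(t+p+m−ℓ, p+m−ℓ)`. -/
theorem monomial_count_identity (p q m s t : ℕ) :
    {f : Fin q ⊕ Fin p ⊕ Fin (m + 1) → ℕ |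
        (∑ x, f x) = s + t ∧ (∑ i : Fin q, f (Sum.inl i)) ≤ s ∧
          (∑ i : Fin p, f (Sum.inr (Sum.inl i))) ≤ t}.ncard
      + ∑ ℓ ∈ Finset.range m,
          (s + q + ℓ).choose (q + ℓ) * (t + (p + m - 1 - ℓ)).choose (p + m - 1 - ℓ)
      = ∑ ℓ ∈ Finset.range (m + 1),
          (s + q + ℓ).choose (q + ℓ) * (t + (p + m - ℓ)).choose (p + m - ℓ) := by
  simpa only [choosePair, add_assoc, boundedMonomials] using ncard_boundedMonomials_fin p s t m q
end

section
/- Let k be a field, let r and n be natural numbers with n ≥ 1, and let m_0,…,m_n be natural numbers with Σ_{i=0}^{n}(m_i+1) ≤ r+1. Define p_0 = 0 and p_i = p_{i−1} + m_{i−1} + 1 for i = 1,…,n. In the polynomial ring R = k[x_0,…,x_r, y_0,…,y_r], for each i = 0,…,n let J_i be the ideal generated by the variables x_a for 0 ≤ a ≤ p_i − 1, the variables y_b for m_i + p_i + 1 ≤ b ≤ r, and the binomials x_j·y_ℓ − x_ℓ·y_j for p_i ≤ j, ℓ ≤ m_i + p_i. Then J_n + (J_0 ∩ J_1 ∩ ⋯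 ∩ J_{n−1}) = J_n + J_{n−1}, and both equal the ideal generated by the variables x_a for 0 ≤ a ≤ p_n − 1 together with the variables y_b for p_n ≤ b ≤ r. -/
open MvPolynomial

/-!
Every ideal in sight lies in `K_P`, the ideal of the `x_a` with `a < P` and the `y_b` with
`P ≤ b`, where `P = p_n`: a binomial of the block of `J_n` lies in the ideal of the `y`'s, and one
of the block of `J_{n−1}`, which ends at `P − 1`, in the ideal of the `x`'s. Conversely
`K_P ≤ J_n + ⋂_{i<n} J_i`: the `x_a` with `a < P` lie in `J_n`, and each `y_b` with `b ≥ P` lies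
in every `J_i`, `i < n`, since `P` is past the block of `J_i`. With `⋂_{i<n} J_i ≤ J_{n−1}` this
closes the chain of inclusions.
-/

section

variable {k σ : Type*} [CommRing k]

theorem sub_mem_of_X_inl_mem {I : Ideal (MvPolynomial (σ ⊕ σ) k)} {j l : σ}
    (hj : X (Sum.inl j) ∈ I) (hl : X (Sum.inl l) ∈ I) :
    X (Sum.inl j) * X (Sum.inr l) - X (Sum.inl l) * X (Sum.inr j) ∈ I :=
  sub_mem (I.mul_mem_right _ hj) (I.mul_mem_right _ hl)

theorem sub_mem_of_X_inr_mem {I : Ideal (MvPolynomial (σ ⊕ σ) k)} {j l : σ}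
    (hj : X (Sum.inr j) ∈ I) (hl : X (Sum.inr l) ∈ I) :
    X (Sum.inl j) * X (Sum.inr l) - X (Sum.inl l) * X (Sum.inr j) ∈ I :=
  sub_mem (I.mul_mem_left _ hl) (I.mul_mem_left _ hj)

end

section

variable (k : Type*) [CommRing k] (N : ℕ)

/-- The ideal `J_i` of the component `Q_i`, for `p = p_i` and `m = m_i`; its block of indices
is `[p, p + m]`. -/
noncomputable def blockIdeal (p m : ℕ) : Ideal (MvPolynomial (Fin N ⊕ Fin N) k) :=
  Ideal.span {f |
    (∃ a : Fin N, (a : ℕ) < p ∧ f = X (Sum.inl a)) ∨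
    (∃ b : Fin N, m + p + 1 ≤ (b : ℕ) ∧ f = X (Sum.inr b)) ∨
    (∃ j l : Fin N, p ≤ (j : ℕ) ∧ (j : ℕ) ≤ m + p ∧ p ≤ (l : ℕ) ∧ (l : ℕ) ≤ m + p ∧
      f = X (Sum.inl j) * X (Sum.inr l) - X (Sum.inl l) * X (Sum.inr j))}

noncomputable def splitIdeal (P : ℕ) : Ideal (MvPolynomial (Fin N ⊕ Fin N) k) :=
  Ideal.span {f |
    (∃ a : Fin N, (a : ℕ) < P ∧ f = X (Sum.inl a)) ∨
    (∃ b : Fin N, P ≤ (b : ℕ) ∧ f = X (Sum.inr b))}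

variable {k N}

theorem X_inl_mem_blockIdeal {p m : ℕ} {a : Fin N} (ha : (a : ℕ) < p) :
    X (Sum.inl a) ∈ blockIdeal k N p m :=
  Ideal.subset_span (Or.inl ⟨a, ha, rfl⟩)

theorem X_inr_mem_blockIdeal {p m : ℕ} {b : Fin N} (hb : p + m + 1 ≤ (b : ℕ)) :
    X (Sum.inr b) ∈ blockIdeal k N p m :=
  Ideal.subset_span (Or.inr (Or.inl ⟨b, by omega, rfl⟩))

theorem X_inl_mem_splitIdeal {P : ℕ} {a : Fin N} (ha : (a : ℕ) < P) :
    X (Sum.inl a) ∈ splitIdeal k N P :=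
  Ideal.subset_span (Or.inl ⟨a, ha, rfl⟩)

theorem X_inr_mem_splitIdeal {P : ℕ} {b : Fin N} (hb : P ≤ (b : ℕ)) :
    X (Sum.inr b) ∈ splitIdeal k N P :=
  Ideal.subset_span (Or.inr ⟨b, hb, rfl⟩)

theorem blockIdeal_le_splitIdeal_self (P m : ℕ) : blockIdeal k N P m ≤ splitIdeal k N P := by
  rw [blockIdeal, Ideal.span_le]
  rintro f (⟨a, ha, rfl⟩ | ⟨b, hb, rfl⟩ | ⟨j, l, hj, -, hl, -, rfl⟩)
  · exact X_inl_mem_splitIdeal ha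
  · exact X_inr_mem_splitIdeal (by omega)
  · exact sub_mem_of_X_inr_mem (X_inr_mem_splitIdeal hj) (X_inr_mem_splitIdeal hl)

theorem blockIdeal_le_splitIdeal_of_add_eq {p m P : ℕ} (hP : p + m + 1 = P) :
    blockIdeal k N p m ≤ splitIdeal k N P := by
  rw [blockIdeal, Ideal.span_le]
  rintro f (⟨a, ha, rfl⟩ | ⟨b, hb, rfl⟩ | ⟨j, l, -, hj, -, hl, rfl⟩)
  · exact X_inl_mem_splitIdeal (by omega)
  · exact X_inr_mem_splitIdeal (by omega)
  · exact sub_mem_of_X_inl_mem (X_inl_mem_splitIdeal (by omega))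
      (X_inl_mem_splitIdeal (by omega))

theorem splitIdeal_le_sup_iInf_blockIdeal {ι : Type*} {P M : ℕ} {p m : ι → ℕ}
    (hpm : ∀ i, p i + m i + 1 ≤ P) :
    splitIdeal k N P ≤ blockIdeal k N P M ⊔ ⨅ i, blockIdeal k N (p i) (m i) := by
  rw [splitIdeal, Ideal.span_le]
  rintro f (⟨a, ha, rfl⟩ | ⟨b, hb, rfl⟩)
  · exact Ideal.mem_sup_left (X_inl_mem_blockIdeal ha)
  · exact Ideal.mem_sup_right
      (Submodule.mem_iInf _ |>.mpr fun i => X_inr_mem_blockIdeal ((hpm i).trans hb))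

end

theorem add_add_one_le_last {n : ℕ} {p m : Fin (n + 1) → ℕ}
    (hp : ∀ i : Fin n, p i.succ = p i.castSucc + m i.castSucc + 1) (i : Fin n) :
    p i.castSucc + m i.castSucc + 1 ≤ p (Fin.last n) := by
  have hmono : Monotone p :=
    (Fin.strictMono_iff_lt_succ.mpr fun i => by rw [hp i]; omega).monotone
  exact hp i ▸ hmono (Fin.le_last _)

/-- In `R = k[x_0,…,x_r, y_0,…,y_r]`, with `J_i` the ideal generated by the variables
`x_a` for `a < p_i`, the variables `y_b` for `m_i + p_i + 1 ≤ b ≤ r`, and the binomials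
`x_j y_ℓ − x_ℓ y_j` for `p_i ≤ j, ℓ ≤ m_i + p_i`, we have
`J_n + (J_0 ∩ ⋯ ∩ J_{n−1}) = J_n + J_{n−1}`, and both equal the ideal generated by the
`x_a` for `a < p_n` together with the `y_b` for `p_n ≤ b ≤ r`. -/
theorem sum_inter_ideals_eq (k : Type*) [Field k] (r n : ℕ) (hn : 1 ≤ n)
    (m : Fin (n + 1) → ℕ)
    (p : Fin (n + 1) → ℕ)
    (hp : ∀ i : Fin n, p i.succ = p i.castSucc + m i.castSucc + 1)
    (J : Fin (n + 1) → Ideal (MvPolynomial (Fin (r + 1) ⊕ Fin (r + 1)) k))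
    (hJ : ∀ i, J i = Ideal.span {f |
      (∃ a : Fin (r + 1), (a : ℕ) < p i ∧ f = X (Sum.inl a)) ∨
      (∃ b : Fin (r + 1), m i + p i + 1 ≤ (b : ℕ) ∧ f = X (Sum.inr b)) ∨
      (∃ j l : Fin (r + 1), p i ≤ (j : ℕ) ∧ (j : ℕ) ≤ m i + p i ∧
        p i ≤ (l : ℕ) ∧ (l : ℕ) ≤ m i + p i ∧
        f = X (Sum.inl j) * X (Sum.inr l) - X (Sum.inl l) * X (Sum.inr j))}) :
    J (Fin.last n) + (⨅ i : Fin n, J i.castSucc) = J (Fin.last n) + J ⟨n - 1, by omega⟩ ∧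
    J (Fin.last n) + J ⟨n - 1, by omega⟩ =
      Ideal.span {f |
        (∃ a : Fin (r + 1), (a : ℕ) < p (Fin.last n) ∧ f = X (Sum.inl a)) ∨
        (∃ b : Fin (r + 1), p (Fin.last n) ≤ (b : ℕ) ∧ f = X (Sum.inr b))} := by
  have hJ' : ∀ i, J i = blockIdeal k (r + 1) (p i) (m i) := hJ
  change _ ∧ _ = splitIdeal k (r + 1) (p (Fin.last n))
  obtain ⟨n', rfl⟩ : ∃ n', n = n' + 1 := ⟨n - 1, by omega⟩
  have hprev :
      p (Fin.last n').castSucc + m (Fin.last n').castSucc + 1 = p (Fin.last (n' + 1)) :=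
    (hp (Fin.last n')).symm
  have hsplit_le : splitIdeal k (r + 1) (p (Fin.last (n' + 1))) ≤
      J (Fin.last (n' + 1)) + ⨅ i : Fin (n' + 1), J i.castSucc := by
    simp only [hJ']
    exact splitIdeal_le_sup_iInf_blockIdeal (add_add_one_le_last hp)
  have hinf_le : J (Fin.last (n' + 1)) + ⨅ i : Fin (n' + 1), J i.castSucc ≤
      J (Fin.last (n' + 1)) + J (Fin.last n').castSucc :=
    sup_le_sup_left (iInf_le _ _) _
  have hle_split : J (Fin.last (n' + 1)) + J (Fin.last n').castSucc ≤
      splitIdeal k (r + 1) (p (Fin.last (n' + 1))) := by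
    rw [hJ', hJ']
    exact sup_le (blockIdeal_le_splitIdeal_self _ _) (blockIdeal_le_splitIdeal_of_add_eq hprev)
  exact ⟨hinf_le.antisymm (hle_split.trans hsplit_le),
    hle_split.antisymm (hsplit_le.trans hinf_le)⟩
end

section
/- Let k be a field, let r and n be natural numbers, and let m_0,…,m_n be natural numbers with Σ_{i=0}^{n}(m_i+1) = r+1 (equivalently p_n + m_n = r). Define p_0 = 0 and p_i = p_{i−1} + m_{i−1} + 1 for i = 1,…,n. In the polynomial ring R = k[x_0,…,x_r, y_0,…,y_r], for each i = 0,…,n let J_i be the ideal generated by the variables x_a for 0 ≤ a ≤ p_i − 1, the variables y_b for m_i + p_i + 1 ≤ b ≤ r, and the binomials x_j·y_ℓ − x_ℓ·y_j for p_i ≤ j, ℓ ≤ m_i + p_i. Then for all natural numbers s, t, the k-dimension of the bidegree-(s,t) graded piece of R/(J_0 ∩ ⋯ ∩ J_n) equals the binomial coefficient C(s+t+r, r). -/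
open MvPolynomial Finset

namespace DBPaux

/-- greedy bottom-cut function -/
def bcut (t : ℕ) (c : ℕ → ℕ) (j : ℕ) : ℕ := min (c j) (t - ∑ l ∈ Finset.range j, c l)

lemma bcut_sum (t : ℕ) (c : ℕ → ℕ) (J : ℕ) :
    ∑ l ∈ Finset.range J, bcut t c l = min (∑ l ∈ Finset.range J, c l) t := by
  induction J with
  | zero => simp
  | succ J ih =>
    rw [Finset.sum_range_succ, Finset.sum_range_succ, ih, bcut]
    omega

lemma bcut_le (t : ℕ) (c : ℕ → ℕ) (j : ℕ) : bcut t c j ≤ c j := min_le_left _ _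

lemma bcut_zero_of_lt {t : ℕ} {c : ℕ → ℕ} {j l : ℕ} (h : bcut t c j < c j) (hjl : j < l) :
    bcut t c l = 0 := by
  have h1 : t ≤ ∑ i ∈ Finset.range (j + 1), c i := by
    rw [Finset.sum_range_succ]
    unfold bcut at h
    omega
  have h2 : ∑ i ∈ Finset.range (j + 1), c i ≤ ∑ i ∈ Finset.range l, c i :=
    Finset.sum_le_sum_of_subset (Finset.range_subset_range.mpr hjl)
  unfold bcut
  omega

/-- extension of a `Fin q`-indexed family to `ℕ` -/
def cext (q : ℕ) (c : Fin q → ℕ) (l : ℕ) : ℕ := if h : l < q then c ⟨l, h⟩ else 0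

lemma cext_coe (q : ℕ) (c : Fin q → ℕ) (j : Fin q) : cext q c (j : ℕ) = c j := by
  unfold cext
  rw [dif_pos j.isLt]

lemma sum_cext (q : ℕ) (c : Fin q → ℕ) :
    ∑ l ∈ Finset.range q, cext q c l = ∑ j : Fin q, c j := by
  rw [← Fin.sum_univ_eq_sum_range (cext q c) q]
  exact Finset.sum_congr rfl fun j _ => cext_coe q c j

/-- the sorted monomial exponent associated to a total degree vector `c`. -/
noncomputable def sortedOf (q t : ℕ) (c : Fin q → ℕ) : (Fin q ⊕ Fin q) →₀ ℕ :=
  Finsupp.equivFunOnFinite.symm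
    (Sum.elim (fun j => c j - bcut t (cext q c) j) (fun j => bcut t (cext q c) j))

lemma sortedOf_inl (q t : ℕ) (c : Fin q → ℕ) (j : Fin q) :
    sortedOf q t c (Sum.inl j) = c j - bcut t (cext q c) j := rfl

lemma sortedOf_inr (q t : ℕ) (c : Fin q → ℕ) (j : Fin q) :
    sortedOf q t c (Sum.inr j) = bcut t (cext q c) j := rfl

lemma sortedOf_merge (q t : ℕ) (c : Fin q → ℕ) (j : Fin q) :
    sortedOf q t c (Sum.inl j) + sortedOf q t c (Sum.inr j) = c j := by
  rw [sortedOf_inl, sortedOf_inr]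
  have := bcut_le t (cext q c) j
  rw [cext_coe] at this
  omega

lemma sortedOf_sorted (q t : ℕ) (c : Fin q → ℕ) {j l : Fin q}
    (hj : sortedOf q t c (Sum.inl j) ≠ 0) (hl : sortedOf q t c (Sum.inr l) ≠ 0) : l ≤ j := by
  by_contra hlt
  have hjl : (j : ℕ) < (l : ℕ) := by
    have := lt_of_not_ge hlt
    exact this
  rw [sortedOf_inl] at hj
  rw [sortedOf_inr] at hl
  have h1 : bcut t (cext q c) (j : ℕ) < cext q c (j : ℕ) := by
    rw [cext_coe]
    omega
  exact hl (bcut_zero_of_lt h1 hjl)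

lemma sortedOf_sum_inr {q s t : ℕ} {c : Fin q → ℕ} (hc : ∑ j, c j = s + t) :
    ∑ j : Fin q, sortedOf q t c (Sum.inr j) = t := by
  have h1 : ∑ j : Fin q, sortedOf q t c (Sum.inr j)
      = ∑ l ∈ Finset.range q, bcut t (cext q c) l := by
    rw [← Fin.sum_univ_eq_sum_range (bcut t (cext q c)) q]
    rfl
  rw [h1, bcut_sum, sum_cext, hc]
  omega

lemma sortedOf_sum_inl {q s t : ℕ} {c : Fin q → ℕ} (hc : ∑ j, c j = s + t) :
    ∑ j : Fin q, sortedOf q t c (Sum.inl j) = s := by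
  have key : (∑ j : Fin q, sortedOf q t c (Sum.inl j))
      + (∑ j : Fin q, sortedOf q t c (Sum.inr j)) = ∑ j : Fin q, c j := by
    rw [← Finset.sum_add_distrib]
    exact Finset.sum_congr rfl fun j _ => sortedOf_merge q t c j
  rw [sortedOf_sum_inr hc, hc] at key
  omega

lemma sorted_unique_aux {q : ℕ} {d d' : (Fin q ⊕ Fin q) →₀ ℕ}
    (hd : ∀ j l : Fin q, d (Sum.inl j) ≠ 0 → d (Sum.inr l) ≠ 0 → l ≤ j)
    (hd' : ∀ j l : Fin q, d' (Sum.inl j) ≠ 0 → d' (Sum.inr l) ≠ 0 → l ≤ j)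
    (hmer : ∀ j, d (Sum.inl j) + d (Sum.inr j) = d' (Sum.inl j) + d' (Sum.inr j))
    (hsum : ∑ j : Fin q, d (Sum.inr j) = ∑ j : Fin q, d' (Sum.inr j))
    {l : Fin q} (hl : d (Sum.inr l) < d' (Sum.inr l)) : False := by
  have hex : ∃ l2, d' (Sum.inr l2) < d (Sum.inr l2) := by
    by_contra hc
    push_neg at hc
    have := Finset.sum_lt_sum (fun i (_ : i ∈ Finset.univ) => hc i)
      ⟨l, Finset.mem_univ l, hl⟩
    omega
  obtain ⟨l2, hl2⟩ := hex
  have h1 : d (Sum.inl l) ≠ 0 := by have := hmer l; omega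
  have h2 : d (Sum.inr l2) ≠ 0 := by omega
  have h3 : d' (Sum.inl l2) ≠ 0 := by have := hmer l2; omega
  have h4 : d' (Sum.inr l) ≠ 0 := by omega
  have e1 := hd l l2 h1 h2
  have e2 := hd' l2 l h3 h4
  have : l = l2 := le_antisymm e2 e1
  subst this
  omega

lemma sorted_unique {q : ℕ} {d d' : (Fin q ⊕ Fin q) →₀ ℕ}
    (hd : ∀ j l : Fin q, d (Sum.inl j) ≠ 0 → d (Sum.inr l) ≠ 0 → l ≤ j)
    (hd' : ∀ j l : Fin q, d' (Sum.inl j) ≠ 0 → d' (Sum.inr l) ≠ 0 → l ≤ j)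
    (hmer : ∀ j, d (Sum.inl j) + d (Sum.inr j) = d' (Sum.inl j) + d' (Sum.inr j))
    (hsum : ∑ j : Fin q, d (Sum.inr j) = ∑ j : Fin q, d' (Sum.inr j)) : d = d' := by
  have hr : ∀ l, d (Sum.inr l) = d' (Sum.inr l) := by
    intro l
    rcases lt_trichotomy (d (Sum.inr l)) (d' (Sum.inr l)) with h | h | h
    · exact (sorted_unique_aux hd hd' hmer hsum h).elim
    · exact h
    · exact (sorted_unique_aux hd' hd (fun j => (hmer j).symm) hsum.symm h).elim
  ext a
  rcases a with j | j
  · have := hmer j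
    have := hr j
    omega
  · exact hr j

lemma prod_monomial_one {k : Type*} [CommSemiring k] {ι α : Type*} (F : Finset α)
    (e : α → (ι →₀ ℕ)) :
    (∏ a ∈ F, (monomial (e a) (1 : k))) = monomial (∑ a ∈ F, e a) 1 := by
  induction F using Finset.cons_induction with
  | empty => simp
  | cons a F ha ih =>
    rw [Finset.prod_cons, Finset.sum_cons, ih, monomial_mul, one_mul]

lemma X_mul_X {k : Type*} [CommSemiring k] {ι : Type*} (i1 i2 : ι) :
    (X i1 * X i2 : MvPolynomial ι k)
      = monomial (Finsupp.single i1 1 + Finsupp.single i2 1) 1 := by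
  rw [X, X, monomial_mul, one_mul]


/-- target exponent of a bidegree monomial under the auxiliary evaluation maps -/
noncomputable def Edeg {q : ℕ} (d : (Fin q ⊕ Fin q) →₀ ℕ) : (Fin q ⊕ Bool) →₀ ℕ :=
  Finsupp.equivFunOnFinite.symm
    (Sum.elim (fun j => d (Sum.inl j) + d (Sum.inr j))
      (fun bo => if bo then ∑ j : Fin q, d (Sum.inl j) else ∑ j : Fin q, d (Sum.inr j)))

lemma Edeg_inl {q : ℕ} (d : (Fin q ⊕ Fin q) →₀ ℕ) (j : Fin q) :
    Edeg d (Sum.inl j) = d (Sum.inl j) + d (Sum.inr j) := rfl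



lemma aeval_monomial_good {k : Type*} [CommSemiring k] {q : ℕ}
    (g : (Fin q ⊕ Fin q) → MvPolynomial (Fin q ⊕ Bool) k)
    (d : (Fin q ⊕ Fin q) →₀ ℕ)
    (hgl : ∀ j : Fin q, d (Sum.inl j) ≠ 0 → g (Sum.inl j) = X (Sum.inr true) * X (Sum.inl j))
    (hgr : ∀ j : Fin q, d (Sum.inr j) ≠ 0 → g (Sum.inr j) = X (Sum.inr false) * X (Sum.inl j)) :
    aeval g (monomial d (1 : k)) = monomial (Edeg d) 1 := by
  classical
  set hfun : (Fin q ⊕ Fin q) → ((Fin q ⊕ Bool) →₀ ℕ) :=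
    Sum.elim (fun j => Finsupp.single (Sum.inr true) 1 + Finsupp.single (Sum.inl j) 1)
      (fun j => Finsupp.single (Sum.inr false) 1 + Finsupp.single (Sum.inl j) 1) with hhfun
  have hstep : ∀ a ∈ d.support, g a ^ d a = monomial (d a • hfun a) 1 := by
    intro a ha
    rcases a with j | j
    · rw [hgl j (Finsupp.mem_support_iff.mp ha), X_mul_X, monomial_pow, one_pow]
      rfl
    · rw [hgr j (Finsupp.mem_support_iff.mp ha), X_mul_X, monomial_pow, one_pow]
      rfl
  have hext : ∑ a ∈ d.support, d a • hfun a = ∑ a : Fin q ⊕ Fin q, d a • hfun a :=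
    Finset.sum_subset (Finset.subset_univ _)
      (fun a _ ha => by rw [Finsupp.notMem_support_iff.mp ha, zero_smul])
  have hEq : (∑ a ∈ d.support, d a • hfun a) = Edeg d := by
    rw [hext]
    ext x
    rw [Finsupp.finset_sum_apply]
    simp only [Finsupp.smul_apply, smul_eq_mul, Fintype.sum_sum_type]
    rcases x with j0 | bo
    · have hc1 : ∀ j : Fin q, (hfun (Sum.inl j)) (Sum.inl j0) = if j = j0 then 1 else 0 := by
        intro j; simp [hhfun, Finsupp.single_apply]
      have hc2 : ∀ j : Fin q, (hfun (Sum.inr j)) (Sum.inl j0) = if j = j0 then 1 else 0 := by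
        intro j; simp [hhfun, Finsupp.single_apply]
      simp only [hc1, hc2, mul_ite, mul_one, mul_zero]
      rw [Finset.sum_ite_eq', Finset.sum_ite_eq']
      simp [Edeg_inl]
    · rcases bo with _ | _
      · -- false : v
        have hc1 : ∀ j : Fin q, (hfun (Sum.inl j)) (Sum.inr false) = 0 := by
          intro j; simp [hhfun, Finsupp.single_apply]
        have hc2 : ∀ j : Fin q, (hfun (Sum.inr j)) (Sum.inr false) = 1 := by
          intro j; simp [hhfun, Finsupp.single_apply]
        simp only [hc1, hc2, mul_one, mul_zero, Finset.sum_const_zero, zero_add]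
        rfl
      · have hc1 : ∀ j : Fin q, (hfun (Sum.inl j)) (Sum.inr true) = 1 := by
          intro j; simp [hhfun, Finsupp.single_apply]
        have hc2 : ∀ j : Fin q, (hfun (Sum.inr j)) (Sum.inr true) = 0 := by
          intro j; simp [hhfun, Finsupp.single_apply]
        simp only [hc1, hc2, mul_one, mul_zero, Finset.sum_const_zero, add_zero]
        rfl
  rw [aeval_monomial, map_one, one_mul, Finsupp.prod, Finset.prod_congr rfl hstep,
    prod_monomial_one, hEq]

end DBPaux



set_option maxHeartbeats 2000000 in
/-- In `R = k[x_0,…,x_r, y_0,…,y_r]`, with `J_i` the ideal generated by the variables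
`x_a` for `a < p_i`, the variables `y_b` for `m_i + p_i + 1 ≤ b ≤ r`, and the binomials
`x_j y_ℓ − x_ℓ y_j` for `p_i ≤ j, ℓ ≤ m_i + p_i`, and with `Σ_i (m_i + 1) = r + 1`,
the dimension of the bidegree `(s,t)` piece of `R/(J_0 ∩ ⋯ ∩ J_n)` is `C(s+t+r, r)`. -/
theorem dim_bideg_piece_union_maximal (k : Type*) [Field k] (r n : ℕ)
    (m : Fin (n + 1) → ℕ) (hm : (∑ i, (m i + 1)) = r + 1)
    (p : Fin (n + 1) → ℕ) (hp0 : p 0 = 0)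
    (hp : ∀ i : Fin n, p i.succ = p i.castSucc + m i.castSucc + 1)
    (J : Fin (n + 1) → Ideal (MvPolynomial (Fin (r + 1) ⊕ Fin (r + 1)) k))
    (hJ : ∀ i, J i = Ideal.span {f |
      (∃ a : Fin (r + 1), (a : ℕ) < p i ∧ f = X (Sum.inl a)) ∨
      (∃ b : Fin (r + 1), m i + p i + 1 ≤ (b : ℕ) ∧ f = X (Sum.inr b)) ∨
      (∃ j l : Fin (r + 1), p i ≤ (j : ℕ) ∧ (j : ℕ) ≤ m i + p i ∧
        p i ≤ (l : ℕ) ∧ (l : ℕ) ≤ m i + p i ∧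
        f = X (Sum.inl j) * X (Sum.inr l) - X (Sum.inl l) * X (Sum.inr j))})
    (s t : ℕ) :
    Module.finrank k ((bidegPiece k (Fin (r + 1)) (Fin (r + 1)) s t).map
        (Ideal.Quotient.mkₐ k (⨅ i, J i)).toLinearMap)
      = (s + t + r).choose r := by
  classical
  -- ## Part A: block combinatorics
  set mfun : ℕ → ℕ := fun b => if h : b < n + 1 then m ⟨b, h⟩ + 1 else 0 with hmfun
  have hmfun_lt : ∀ (b : ℕ) (h : b < n + 1), mfun b = m ⟨b, h⟩ + 1 := fun b h => dif_pos h
  have psum : ∀ i : Fin (n + 1), p i = ∑ b ∈ Finset.range (i : ℕ), mfun b := by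
    intro i
    induction i using Fin.induction with
    | zero => simpa using hp0
    | succ i ih =>
      have hc : (⟨(i : ℕ), by omega⟩ : Fin (n + 1)) = i.castSucc := by
        apply Fin.ext; simp
      rw [hp i, ih, Fin.val_succ, Finset.sum_range_succ, hmfun_lt (i : ℕ) (by omega), hc,
        Fin.coe_castSucc]
      ring
  have hmr : ∑ b ∈ Finset.range (n + 1), mfun b = r + 1 := by
    rw [← Fin.sum_univ_eq_sum_range mfun (n + 1), ← hm]
    exact Finset.sum_congr rfl fun i _ => hmfun_lt _ i.isLt
  have hstep : ∀ i : Fin (n + 1), p i + m i + 1 = ∑ b ∈ Finset.range ((i : ℕ) + 1), mfun b := by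
    intro i
    rw [Finset.sum_range_succ, ← psum i, hmfun_lt _ i.isLt]
    have : (⟨(i : ℕ), i.isLt⟩ : Fin (n + 1)) = i := by apply Fin.ext; rfl
    rw [this]
    ring
  have hmono : ∀ i i' : Fin (n + 1), (i : ℕ) < (i' : ℕ) → p i + m i + 1 ≤ p i' := by
    intro i i' h
    rw [hstep i, psum i']
    exact Finset.sum_le_sum_of_subset (Finset.range_subset_range.mpr (by omega))
  have hlast0 : ∀ i : Fin (n + 1), (i : ℕ) = n → p i + m i = r := by
    intro i hi
    have h1 := hstep i
    rw [hi, hmr] at h1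
    omega
  have hcover : ∀ jn : ℕ, jn ≤ r → ∃ i : Fin (n + 1), p i ≤ jn ∧ jn ≤ m i + p i := by
    intro jn hjn
    set P : ℕ → Prop := fun b => ∃ h : b < n + 1, p ⟨b, h⟩ ≤ jn with hPd
    have hP0 : P 0 := ⟨by omega, by rw [show (⟨0, by omega⟩ : Fin (n + 1)) = 0 from rfl, hp0]; omega⟩
    set b0 := Nat.findGreatest P n with hb0d
    have hb0n : b0 ≤ n := Nat.findGreatest_le n
    obtain ⟨hb0, hpb0⟩ : P b0 := Nat.findGreatest_spec (Nat.zero_le n) hP0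
    refine ⟨⟨b0, hb0⟩, hpb0, ?_⟩
    by_contra hcon
    push_neg at hcon
    rcases Nat.lt_or_ge b0 n with hbn | hbn
    · have hnext : P (b0 + 1) := by
        refine ⟨by omega, ?_⟩
        have heq := hp ⟨b0, hbn⟩
        have h1 : (⟨b0, hbn⟩ : Fin n).succ = (⟨b0 + 1, by omega⟩ : Fin (n + 1)) := rfl
        have h2 : (⟨b0, hbn⟩ : Fin n).castSucc = (⟨b0, hb0⟩ : Fin (n + 1)) := rfl
        rw [h1, h2] at heq
        omega
      have hgt : Nat.findGreatest P n < b0 + 1 := by omega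
      exact Nat.findGreatest_is_greatest hgt (by omega) hnext
    · have hb0n' : b0 = n := le_antisymm hb0n hbn
      have hfin := hlast0 ⟨b0, hb0⟩ (by simpa using hb0n')
      omega
  -- ## Part B: ideal membership
  have hgen1 : ∀ (i : Fin (n + 1)) (a : Fin (r + 1)), (a : ℕ) < p i →
      (X (Sum.inl a) : MvPolynomial (Fin (r + 1) ⊕ Fin (r + 1)) k) ∈ J i := by
    intro i a h
    rw [hJ i]
    exact Ideal.subset_span (Or.inl ⟨a, h, rfl⟩)
  have hgen2 : ∀ (i : Fin (n + 1)) (b : Fin (r + 1)), m i + p i + 1 ≤ (b : ℕ) →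
      (X (Sum.inr b) : MvPolynomial (Fin (r + 1) ⊕ Fin (r + 1)) k) ∈ J i := by
    intro i b h
    rw [hJ i]
    exact Ideal.subset_span (Or.inr (Or.inl ⟨b, h, rfl⟩))
  have hbin : ∀ (i0 : Fin (n + 1)) (j l : Fin (r + 1)), p i0 ≤ (j : ℕ) → (j : ℕ) ≤ m i0 + p i0 →
      p i0 ≤ (l : ℕ) → (l : ℕ) ≤ m i0 + p i0 →
      (X (Sum.inl j) * X (Sum.inr l) - X (Sum.inl l) * X (Sum.inr j) :
        MvPolynomial (Fin (r + 1) ⊕ Fin (r + 1)) k) ∈ ⨅ i, J i := by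
    intro i0 j l h1 h2 h3 h4
    rw [Submodule.mem_iInf]
    intro i
    rcases lt_trichotomy ((i : ℕ)) ((i0 : ℕ)) with hlt | heq | hgt
    · have hmm := hmono i i0 hlt
      have hyj : (X (Sum.inr j) : MvPolynomial _ k) ∈ J i := hgen2 i j (by omega)
      have hyl : (X (Sum.inr l) : MvPolynomial _ k) ∈ J i := hgen2 i l (by omega)
      exact sub_mem (Ideal.mul_mem_left _ _ hyl) (Ideal.mul_mem_left _ _ hyj)
    · have : i = i0 := Fin.ext heq
      subst this
      rw [hJ i]
      exact Ideal.subset_span (Or.inr (Or.inr ⟨j, l, h1, h2, h3, h4, rfl⟩))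
    · have hmm := hmono i0 i hgt
      have hxj : (X (Sum.inl j) : MvPolynomial _ k) ∈ J i := hgen1 i j (by omega)
      have hxl : (X (Sum.inl l) : MvPolynomial _ k) ∈ J i := hgen1 i l (by omega)
      exact sub_mem (Ideal.mul_mem_right _ _ hxj) (Ideal.mul_mem_right _ _ hxl)
  have hcross : ∀ (j l : Fin (r + 1)),
      (∀ i : Fin (n + 1), ¬(p i ≤ (j : ℕ) ∧ (l : ℕ) ≤ m i + p i)) →
      (X (Sum.inl j) * X (Sum.inr l) : MvPolynomial (Fin (r + 1) ⊕ Fin (r + 1)) k)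
        ∈ ⨅ i, J i := by
    intro j l h
    rw [Submodule.mem_iInf]
    intro i
    rcases Nat.lt_or_ge ((j : ℕ)) (p i) with hc | hc
    · exact Ideal.mul_mem_right _ _ (hgen1 i j hc)
    · have hl : ¬((l : ℕ) ≤ m i + p i) := fun hh => h i ⟨hc, hh⟩
      exact Ideal.mul_mem_left _ _ (hgen2 i l (by omega))
  -- ## Part C: the evaluation maps
  set gm : Fin (n + 1) → (Fin (r + 1) ⊕ Fin (r + 1)) →
      MvPolynomial (Fin (r + 1) ⊕ Bool) k := fun i =>
    Sum.elim
      (fun j => if p i ≤ (j : ℕ) then X (Sum.inr true) * X (Sum.inl j) else 0)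
      (fun j => if (j : ℕ) ≤ m i + p i then X (Sum.inr false) * X (Sum.inl j) else 0)
    with hgm
  have hker : ∀ i : Fin (n + 1), ∀ x ∈ J i, aeval (gm i) x = 0 := by
    intro i
    suffices h : J i ≤ RingHom.ker ((aeval (gm i)).toRingHom :
        MvPolynomial (Fin (r + 1) ⊕ Fin (r + 1)) k →+* MvPolynomial (Fin (r + 1) ⊕ Bool) k) by
      intro x hx
      exact RingHom.mem_ker.mp (h hx)
    rw [hJ i]
    apply Ideal.span_le.mpr
    rintro f (⟨a, ha, rfl⟩ | ⟨b, hb, rfl⟩ | ⟨j, l, h1, h2, h3, h4, rfl⟩) <;>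
      simp only [SetLike.mem_coe, RingHom.mem_ker, AlgHom.toRingHom_eq_coe,
        RingHom.coe_coe, map_sub, map_mul, aeval_X, hgm, Sum.elim_inl, Sum.elim_inr]
    · rw [if_neg (by omega)]
    · rw [if_neg (by omega)]
    · rw [if_pos h1, if_pos h4, if_pos h3, if_pos h2]
      ring
  have hphi_good : ∀ (i : Fin (n + 1)) (d : (Fin (r + 1) ⊕ Fin (r + 1)) →₀ ℕ),
      (∀ j : Fin (r + 1), d (Sum.inl j) ≠ 0 → p i ≤ (j : ℕ)) →
      (∀ j : Fin (r + 1), d (Sum.inr j) ≠ 0 → (j : ℕ) ≤ m i + p i) →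
      aeval (gm i) (monomial d (1 : k)) = monomial (DBPaux.Edeg d) 1 := by
    intro i d hg1 hg2
    apply DBPaux.aeval_monomial_good
    · intro j hjne
      simp only [hgm, Sum.elim_inl]
      rw [if_pos (hg1 j hjne)]
    · intro j hjne
      simp only [hgm, Sum.elim_inr]
      rw [if_pos (hg2 j hjne)]
  have hphi_bad : ∀ (i : Fin (n + 1)) (d : (Fin (r + 1) ⊕ Fin (r + 1)) →₀ ℕ),
      ¬((∀ j : Fin (r + 1), d (Sum.inl j) ≠ 0 → p i ≤ (j : ℕ)) ∧
        (∀ j : Fin (r + 1), d (Sum.inr j) ≠ 0 → (j : ℕ) ≤ m i + p i)) →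
      aeval (gm i) (monomial d (1 : k)) = 0 := by
    intro i d hbad
    rw [aeval_monomial, map_one, one_mul, Finsupp.prod]
    have hz : ∃ a ∈ d.support, gm i a ^ d a = 0 := by
      rcases not_and_or.mp hbad with hb | hb <;> push_neg at hb
      · obtain ⟨j, hj1, hj2⟩ := hb
        refine ⟨Sum.inl j, Finsupp.mem_support_iff.mpr hj1, ?_⟩
        simp only [hgm, Sum.elim_inl]
        rw [if_neg (by omega), zero_pow hj1]
      · obtain ⟨j, hj1, hj2⟩ := hb
        refine ⟨Sum.inr j, Finsupp.mem_support_iff.mpr hj1, ?_⟩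
        simp only [hgm, Sum.elim_inr]
        rw [if_neg (by omega), zero_pow hj1]
    obtain ⟨a, ha, h0⟩ := hz
    exact Finset.prod_eq_zero ha h0
  have hgoodEx : ∀ d : (Fin (r + 1) ⊕ Fin (r + 1)) →₀ ℕ,
      (∀ j l : Fin (r + 1), d (Sum.inl j) ≠ 0 → d (Sum.inr l) ≠ 0 → l ≤ j) →
      ∃ i : Fin (n + 1), (∀ j : Fin (r + 1), d (Sum.inl j) ≠ 0 → p i ≤ (j : ℕ)) ∧
        (∀ j : Fin (r + 1), d (Sum.inr j) ≠ 0 → (j : ℕ) ≤ m i + p i) := by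
    intro d hs
    by_cases hx : ∀ j : Fin (r + 1), d (Sum.inl j) = 0
    · refine ⟨⟨n, by omega⟩, fun j h => absurd (hx j) h, fun j h => ?_⟩
      have hl := hlast0 ⟨n, by omega⟩ rfl
      have := j.isLt
      omega
    · push_neg at hx
      set F : Finset (Fin (r + 1)) := Finset.univ.filter fun j => d (Sum.inl j) ≠ 0 with hF
      have hne : F.Nonempty := by
        obtain ⟨j, hj⟩ := hx
        exact ⟨j, by simp [hF, hj]⟩
      set j0 := F.min' hne with hj0d
      have hj0 : d (Sum.inl j0) ≠ 0 := by
        have := F.min'_mem hne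
        simp only [hF, Finset.mem_filter] at this
        exact this.2
      obtain ⟨i, hi1, hi2⟩ := hcover (j0 : ℕ) (by omega)
      refine ⟨i, ?_, ?_⟩
      · intro j h
        have hle : j0 ≤ j := F.min'_le j (by simp [hF, h])
        have : ((j0 : ℕ)) ≤ (j : ℕ) := hle
        omega
      · intro l h
        have hle : l ≤ j0 := hs j0 l hj0 h
        have : ((l : ℕ)) ≤ (j0 : ℕ) := hle
        omega
  -- ## Part D: the index family and reduction to sorted monomials
  have hcount : ∀ mm : Multiset (Fin (r + 1)), ∑ j : Fin (r + 1), mm.count j = Multiset.card mm := by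
    intro mm
    conv_rhs => rw [← Multiset.toFinsupp_toMultiset mm]
    rw [Finsupp.card_toMultiset, Finsupp.sum_fintype]
    · simp
    · simp
  set cfun : Sym (Fin (r + 1)) (s + t) → (Fin (r + 1) → ℕ) :=
    fun y j => Multiset.count j (y : Multiset (Fin (r + 1))) with hcfun
  have hcsum : ∀ y, ∑ j, cfun y j = s + t := by
    intro y
    simp only [hcfun]
    rw [hcount]
    exact y.prop
  set dfun : Sym (Fin (r + 1)) (s + t) → ((Fin (r + 1) ⊕ Fin (r + 1)) →₀ ℕ) :=
    fun y => DBPaux.sortedOf (r + 1) t (cfun y) with hdfun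
  have hdsorted : ∀ y, ∀ j l : Fin (r + 1),
      dfun y (Sum.inl j) ≠ 0 → dfun y (Sum.inr l) ≠ 0 → l ≤ j := by
    intro y j l h1 h2
    exact DBPaux.sortedOf_sorted (r + 1) t (cfun y) h1 h2
  have hdsum1 : ∀ y, ∑ j : Fin (r + 1), dfun y (Sum.inl j) = s :=
    fun y => DBPaux.sortedOf_sum_inl (hcsum y)
  have hdsum2 : ∀ y, ∑ j : Fin (r + 1), dfun y (Sum.inr j) = t :=
    fun y => DBPaux.sortedOf_sum_inr (hcsum y)
  have hdmerge : ∀ y j, dfun y (Sum.inl j) + dfun y (Sum.inr j) = cfun y j :=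
    fun y j => DBPaux.sortedOf_merge (r + 1) t (cfun y) j
  set mka := Ideal.Quotient.mkₐ k (⨅ i, J i) with hmka
  set f : Sym (Fin (r + 1)) (s + t) →
      (MvPolynomial (Fin (r + 1) ⊕ Fin (r + 1)) k ⧸ ⨅ i, J i) :=
    fun y => mka (monomial (dfun y) 1) with hf
  set SP := Submodule.span k (Set.range f) with hSP
  have hsorted_mem : ∀ d : (Fin (r + 1) ⊕ Fin (r + 1)) →₀ ℕ,
      (∑ j : Fin (r + 1), d (Sum.inl j)) = s → (∑ j : Fin (r + 1), d (Sum.inr j)) = t →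
      (∀ j l : Fin (r + 1), d (Sum.inl j) ≠ 0 → d (Sum.inr l) ≠ 0 → l ≤ j) →
      mka (monomial d 1) ∈ SP := by
    intro d h1 h2 hs
    set c : Fin (r + 1) → ℕ := fun j => d (Sum.inl j) + d (Sum.inr j) with hc
    have hcsum' : ∑ j, c j = s + t := by
      simp only [hc]
      rw [Finset.sum_add_distrib, h1, h2]
    set y : Sym (Fin (r + 1)) (s + t) :=
      ⟨Finsupp.toMultiset (Finsupp.equivFunOnFinite.symm c), by
        rw [Finsupp.card_toMultiset, Finsupp.sum_fintype]
        · simpa using hcsum'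
        · intro i; rfl⟩ with hy
    have hcy : cfun y = c := by
      funext j
      have hco : ((y : Multiset (Fin (r + 1))))
          = Finsupp.toMultiset (Finsupp.equivFunOnFinite.symm c) := rfl
      simp only [hcfun]
      rw [hco, Finsupp.count_toMultiset]
      simp
    have hde : dfun y = d := by
      apply DBPaux.sorted_unique (hdsorted y) hs
      · intro j
        rw [hdmerge y j, hcy]
      · rw [hdsum2 y, h2]
    have hfy : f y = mka (monomial d 1) := by
      rw [hf]
      simp only []
      rw [hde]
    rw [← hfy]
    exact Submodule.subset_span (Set.mem_range_self y)
  have hw1 : ∀ (w : Fin (r + 1) → ℕ) (a b : Fin (r + 1))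
      (E : (Fin (r + 1) ⊕ Fin (r + 1)) →₀ ℕ),
      E = Finsupp.single (Sum.inl a) 1 + Finsupp.single (Sum.inr b) 1 →
      (∑ j' : Fin (r + 1), w j' * E (Sum.inl j')) = w a := by
    intro w a b E hE
    have h : ∀ j' : Fin (r + 1), E (Sum.inl j') = if a = j' then 1 else 0 := by
      intro j'
      rw [hE]
      simp [Finsupp.single_apply]
    simp only [h, mul_ite, mul_one, mul_zero]
    rw [Finset.sum_ite_eq]
    simp
  have hw2 : ∀ (w : Fin (r + 1) → ℕ) (a b : Fin (r + 1))
      (E : (Fin (r + 1) ⊕ Fin (r + 1)) →₀ ℕ),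
      E = Finsupp.single (Sum.inl a) 1 + Finsupp.single (Sum.inr b) 1 →
      (∑ j' : Fin (r + 1), w j' * E (Sum.inr j')) = w b := by
    intro w a b E hE
    have h : ∀ j' : Fin (r + 1), E (Sum.inr j') = if b = j' then 1 else 0 := by
      intro j'
      rw [hE]
      simp [Finsupp.single_apply]
    simp only [h, mul_ite, mul_one, mul_zero]
    rw [Finset.sum_ite_eq]
    simp
  have red : ∀ N : ℕ, ∀ d : (Fin (r + 1) ⊕ Fin (r + 1)) →₀ ℕ,
      (∑ j : Fin (r + 1), d (Sum.inl j)) = s → (∑ j : Fin (r + 1), d (Sum.inr j)) = t →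
      s * r ≤ (∑ j : Fin (r + 1), (j : ℕ) * d (Sum.inl j)) + N →
      mka (monomial d 1) ∈ SP := by
    intro N
    induction N with
    | zero =>
      intro d h1 h2 h3
      apply hsorted_mem d h1 h2
      intro j l hj _
      have hle : ∀ j' : Fin (r + 1), j' ∈ Finset.univ →
          (j' : ℕ) * d (Sum.inl j') ≤ r * d (Sum.inl j') :=
        fun j' _ => Nat.mul_le_mul_right _ (by omega)
      have hsum_le := Finset.sum_le_sum hle
      have hrs : ∑ j' : Fin (r + 1), r * d (Sum.inl j') = r * s := by
        rw [← Finset.mul_sum, h1]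
      have hcomm : s * r = r * s := Nat.mul_comm s r
      have heq : (∑ j' : Fin (r + 1), (j' : ℕ) * d (Sum.inl j'))
          = ∑ j' : Fin (r + 1), r * d (Sum.inl j') := le_antisymm hsum_le (by omega)
      have hpt := (Finset.sum_eq_sum_iff_of_le hle).mp heq j (Finset.mem_univ j)
      have hjr : (j : ℕ) = r := by
        rcases Nat.eq_zero_or_pos (d (Sum.inl j)) with h0 | h0
        · exact absurd h0 hj
        · exact Nat.eq_of_mul_eq_mul_right h0 hpt
      have : (l : ℕ) ≤ (j : ℕ) := by have := l.isLt; omega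
      exact this
    | succ N ih =>
      intro d h1 h2 h3
      by_cases hsrt : ∀ j l : Fin (r + 1), d (Sum.inl j) ≠ 0 → d (Sum.inr l) ≠ 0 → l ≤ j
      · exact hsorted_mem d h1 h2 hsrt
      · push_neg at hsrt
        obtain ⟨j, l, hj, hl, hjl⟩ := hsrt
        have hjl' : (j : ℕ) < (l : ℕ) := Fin.lt_iff_val_lt_val.mp hjl
        set e1 : (Fin (r + 1) ⊕ Fin (r + 1)) →₀ ℕ :=
          Finsupp.single (Sum.inl j) 1 + Finsupp.single (Sum.inr l) 1 with he1
        set e2 : (Fin (r + 1) ⊕ Fin (r + 1)) →₀ ℕ :=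
          Finsupp.single (Sum.inl l) 1 + Finsupp.single (Sum.inr j) 1 with he2
        have he1d : e1 ≤ d := by
          rw [Finsupp.le_def]
          intro a
          rcases eq_or_ne a (Sum.inl j) with rfl | h1a
          · have : e1 (Sum.inl j) = 1 := by simp [he1, Finsupp.single_apply]
            rw [this]
            omega
          · rcases eq_or_ne a (Sum.inr l) with rfl | h2a
            · have : e1 (Sum.inr l) = 1 := by simp [he1, Finsupp.single_apply]
              rw [this]
              omega
            · have : e1 a = 0 := by
                simp only [he1, Finsupp.add_apply, Finsupp.single_apply]
                rw [if_neg (fun hh => h1a hh.symm), if_neg (fun hh => h2a hh.symm)]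
                rfl
              rw [this]
              omega
        set d' := d - e1 with hd'
        have hd'e : d' + e1 = d := tsub_add_cancel_of_le he1d
        have hsplit1 : ∀ w : Fin (r + 1) → ℕ,
            ∑ j' : Fin (r + 1), w j' * d (Sum.inl j')
              = (∑ j' : Fin (r + 1), w j' * d' (Sum.inl j')) + w j := by
          intro w
          conv_lhs => rw [← hd'e]
          simp only [Finsupp.add_apply, Nat.mul_add]
          rw [Finset.sum_add_distrib, hw1 w j l e1 he1]
        have hsplit2 : ∀ w : Fin (r + 1) → ℕ,
            ∑ j' : Fin (r + 1), w j' * d (Sum.inr j')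
              = (∑ j' : Fin (r + 1), w j' * d' (Sum.inr j')) + w l := by
          intro w
          conv_lhs => rw [← hd'e]
          simp only [Finsupp.add_apply, Nat.mul_add]
          rw [Finset.sum_add_distrib, hw2 w j l e1 he1]
        have hone1 := hsplit1 (fun _ => 1)
        have hone2 := hsplit2 (fun _ => 1)
        have hwt1 := hsplit1 (fun j' => (j' : ℕ))
        simp only [one_mul] at hone1 hone2
        by_cases hblk : ∃ i0 : Fin (n + 1), p i0 ≤ (j : ℕ) ∧ (l : ℕ) ≤ m i0 + p i0
        · obtain ⟨i0, hb1, hb2⟩ := hblk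
          have hbin' := hbin i0 j l hb1 (by omega) (by omega) hb2
          set d'' := d' + e2 with hd''
          have hdiff : (monomial d (1 : k)) - monomial d'' 1
              = monomial d' 1 *
                (X (Sum.inl j) * X (Sum.inr l) - X (Sum.inl l) * X (Sum.inr j)) := by
            rw [mul_sub, DBPaux.X_mul_X, DBPaux.X_mul_X, monomial_mul, monomial_mul, mul_one,
              ← he1, ← he2, hd'e, hd'']
          have hmk : mka (monomial d (1 : k)) = mka (monomial d'' 1) := by
            simp only [hmka, Ideal.Quotient.mkₐ_eq_mk]
            exact Ideal.Quotient.eq.mpr (hdiff ▸ Ideal.mul_mem_left _ _ hbin')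
          rw [hmk]
          have hd''1 : ∀ w : Fin (r + 1) → ℕ,
              ∑ j' : Fin (r + 1), w j' * d'' (Sum.inl j')
                = (∑ j' : Fin (r + 1), w j' * d' (Sum.inl j')) + w l := by
            intro w
            simp only [hd'', Finsupp.add_apply, Nat.mul_add]
            rw [Finset.sum_add_distrib, hw1 w l j e2 he2]
          have hd''2 : ∀ w : Fin (r + 1) → ℕ,
              ∑ j' : Fin (r + 1), w j' * d'' (Sum.inr j')
                = (∑ j' : Fin (r + 1), w j' * d' (Sum.inr j')) + w j := by
            intro w
            simp only [hd'', Finsupp.add_apply, Nat.mul_add]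
            rw [Finset.sum_add_distrib, hw2 w l j e2 he2]
          have ha1 := hd''1 (fun _ => 1)
          have ha2 := hd''2 (fun _ => 1)
          have ha3 := hd''1 (fun j' => (j' : ℕ))
          simp only [one_mul] at ha1 ha2
          apply ih d''
          · omega
          · omega
          · omega
        · have hrep : (monomial d (1 : k)) = monomial d' 1 * (X (Sum.inl j) * X (Sum.inr l)) := by
            rw [DBPaux.X_mul_X, monomial_mul, mul_one, ← he1, hd'e]
          have hmem : (monomial d (1 : k)) ∈ ⨅ i, J i := by
            rw [hrep]
            exact Ideal.mul_mem_left _ _ (hcross j l (not_exists.mp hblk))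
          have h0 : mka (monomial d (1 : k)) = 0 := by
            simp only [hmka, Ideal.Quotient.mkₐ_eq_mk]
            exact Ideal.Quotient.eq_zero_iff_mem.mpr hmem
          rw [h0]
          exact Submodule.zero_mem _
  -- ## Part E: linear independence of the sorted monomials
  have hEinj : ∀ y y' : Sym (Fin (r + 1)) (s + t),
      DBPaux.Edeg (dfun y) = DBPaux.Edeg (dfun y') → y = y' := by
    intro y y' hE
    have hc : cfun y = cfun y' := by
      funext j
      have h1 : DBPaux.Edeg (dfun y) (Sum.inl j) = DBPaux.Edeg (dfun y') (Sum.inl j) := by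
        rw [hE]
      rw [DBPaux.Edeg_inl, DBPaux.Edeg_inl, hdmerge y j, hdmerge y' j] at h1
      exact h1
    exact Sym.coe_injective (Multiset.ext.mpr fun a => congrFun hc a)
  have hLI : LinearIndependent k f := by
    rw [linearIndependent_iff']
    intro F g hg y0 hy0
    set d0 := dfun y0 with hd0
    obtain ⟨i0, hgood1, hgood2⟩ := hgoodEx d0 (hdsorted y0)
    have hq0 : (∑ y ∈ F, g y • monomial (dfun y) (1 : k)) ∈ ⨅ i, J i := by
      apply (Ideal.Quotient.eq_zero_iff_mem).mp
      have hmks : (Ideal.Quotient.mk (⨅ i, J i)) (∑ y ∈ F, g y • monomial (dfun y) (1 : k))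
          = ∑ y ∈ F, g y • f y := by
        rw [← Ideal.Quotient.mkₐ_eq_mk k, ← hmka, map_sum]
        refine Finset.sum_congr rfl fun y _ => ?_
        rw [map_smul]
      rw [hmks, hg]
    have hq0' := (Submodule.mem_iInf J).mp hq0 i0
    have h0 := hker i0 _ hq0'
    rw [map_sum] at h0
    simp only [map_smul] at h0
    have h0' := congrArg (MvPolynomial.coeff (DBPaux.Edeg d0)) h0
    rw [MvPolynomial.coeff_sum] at h0'
    simp only [coeff_smul, smul_eq_mul, MvPolynomial.coeff_zero] at h0'
    have hterm : ∀ y ∈ F, y ≠ y0 →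
        g y * coeff (DBPaux.Edeg d0) (aeval (gm i0) (monomial (dfun y) (1 : k))) = 0 := by
      intro y _ hne
      by_cases hgd : (∀ j : Fin (r + 1), dfun y (Sum.inl j) ≠ 0 → p i0 ≤ (j : ℕ)) ∧
          (∀ j : Fin (r + 1), dfun y (Sum.inr j) ≠ 0 → (j : ℕ) ≤ m i0 + p i0)
      · rw [hphi_good i0 (dfun y) hgd.1 hgd.2, coeff_monomial, if_neg, mul_zero]
        intro hEeq
        exact hne (hEinj y y0 hEeq)
      · rw [hphi_bad i0 (dfun y) hgd, MvPolynomial.coeff_zero, mul_zero]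
    have hy0term : coeff (DBPaux.Edeg d0) (aeval (gm i0) (monomial d0 (1 : k))) = 1 := by
      rw [hphi_good i0 d0 hgood1 hgood2, coeff_monomial, if_pos rfl]
    rw [Finset.sum_eq_single_of_mem y0 hy0 hterm] at h0'
    rwa [hy0term, mul_one] at h0'
  -- ## Part F: the mapped submodule equals the span of the sorted monomials
  have hVeq : Submodule.map mka.toLinearMap (bidegPiece k (Fin (r + 1)) (Fin (r + 1)) s t)
      = SP := by
    rw [bidegPiece, Submodule.map_span]
    apply le_antisymm
    · rw [Submodule.span_le]
      rintro v ⟨P, hP, rfl⟩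
      have hPsum : mka.toLinearMap P
          = ∑ v ∈ P.support, (coeff v P) • mka (monomial v 1) := by
        rw [AlgHom.toLinearMap_apply]
        conv_lhs => rw [MvPolynomial.as_sum P]
        rw [map_sum]
        refine Finset.sum_congr rfl fun v _ => ?_
        have hvv : (monomial v (coeff v P) : MvPolynomial (Fin (r + 1) ⊕ Fin (r + 1)) k)
            = coeff v P • monomial v 1 := by
          rw [smul_monomial, smul_eq_mul, mul_one]
        rw [hvv]
        exact map_smul mka _ _
      rw [hPsum]
      apply Submodule.sum_mem
      intro v hv
      exact Submodule.smul_mem _ _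
        (red (s * r) v (hP v hv).1 (hP v hv).2 (Nat.le_add_left _ _))
    · rw [hSP, Submodule.span_le]
      rintro v ⟨y, rfl⟩
      have hmem : (monomial (dfun y) (1 : k)) ∈ {P : MvPolynomial (Fin (r + 1) ⊕ Fin (r + 1)) k |
          ∀ dd ∈ P.support, (∑ i : Fin (r + 1), dd (Sum.inl i)) = s ∧
            (∑ j : Fin (r + 1), dd (Sum.inr j)) = t} := by
        intro dd hdd
        rw [support_monomial, if_neg one_ne_zero, Finset.mem_singleton] at hdd
        subst hdd
        exact ⟨hdsum1 y, hdsum2 y⟩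
      exact Submodule.subset_span ⟨monomial (dfun y) 1, hmem, rfl⟩
  rw [hVeq, hSP, finrank_span_eq_card hLI]
  rw [Sym.card_sym_eq_choose, Fintype.card_fin]
  have h1 : r + 1 + (s + t) - 1 = s + t + r := by omega
  rw [h1, ← Nat.choose_symm (by omega : s + t ≤ s + t + r)]
  congr 1
  omega
end

section
/- Let k be a field, let r and n be natural numbers, and let m_0,…,m_n be natural numbers with Σ_{i=0}^{n}(m_i+1) ≤ r+1. Define p_0 = 0 and p_i = p_{i−1} + m_{i−1} + 1 for i = 1,…,n. In the polynomial ring R = k[x_0,…,x_r, y_0,…,y_r], for each i = 0,…,n let J_i be the ideal generated by the variables x_a for 0 ≤ a ≤ p_i − 1, the variables y_b for m_i + p_i + 1 ≤ b ≤ r, and the binomials x_j·y_ℓ − x_ℓ·y_j for p_i ≤ j, ℓ ≤ m_i + p_i. Then the Krull dimension of the quotient ring R/(J_0 ∩ ⋯ ∩ J_n) equals r + 2. -/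
/-!
Upper bound: along a chain of primes `P₀ < P₁ < ⋯ < P_L`, an element of `P₁ \ P₀` is
transcendental over any lift to `A ⧸ P₀` of an algebraically independent family of `A ⧸ P₁`,
so `L ≤ trdeg k (A ⧸ P₀)`. A prime `Q ⊇ J_0 ∩ ⋯ ∩ J_n` contains some `J_i`, and then `R ⧸ Q`
is algebraic over the images of `r + 2` variables: if some window variable `x_j` is nonzero
in `R ⧸ Q`, the relations `x_j y_l = x_l y_j` make every window `y_l` algebraic over the
`x`'s and `y_j`; otherwise `R ⧸ Q` is generated by `r + 1` variables.

Lower bound: `J_0` lies in the kernel of the map `x_a ↦ z_a`, `y_b ↦ t z_b` (`b ≤ m_0`) to a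
polynomial ring. Its image `D` is a domain, and `D ⧸ (y_0)` maps onto `k[x_0, …, x_r]`, so
`dim D ≥ (r + 1) + 1`.
-/

open MvPolynomial Algebra Cardinal

section TranscendenceDegree

variable {k A B C : Type*} [Field k] [CommRing A] [Algebra k A] [CommRing B] [Algebra k B]
  [CommRing C] [Algebra k C]

theorem AlgebraicIndependent.injOn_adjoin_of_comp {ι : Type*} {t : ι → B} (g : B →ₐ[k] C)
    (h : AlgebraicIndependent k (g ∘ t)) : Set.InjOn g (adjoin k (Set.range t)) := by
  rw [adjoin_range_eq_range_aeval]
  rintro _ ⟨p, rfl⟩ _ ⟨q, rfl⟩ hpq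
  change g (aeval t p) = g (aeval t q) at hpq
  rw [comp_aeval_apply, comp_aeval_apply] at hpq
  rw [algebraicIndependent_iff_injective_aeval.mp h hpq]

theorem transcendental_adjoin_of_map_eq_zero [IsDomain B] {ι : Type*} {t : ι → B}
    (g : B →ₐ[k] C) (ht : AlgebraicIndependent k (g ∘ t)) {b : B} (hb : b ≠ 0)
    (hgb : g b = 0) :
    Transcendental (adjoin k (Set.range t)) b := by
  intro halg
  obtain ⟨u, -, s, hs, hbu⟩ :=
    halg.exists_nonzero_eq_adjoin_mul (mem_nonZeroDivisors_of_ne_zero hb)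
  refine hs (Subtype.ext (ht.injOn_adjoin_of_comp g s.2 (Subalgebra.zero_mem _) ?_))
  rw [ZeroMemClass.coe_zero, map_zero, show (s : B) = b * u from hbu.symm, map_mul, hgb,
    zero_mul]

theorem trdeg_quotient_add_one_le {P Q : Ideal A} [P.IsPrime] [Q.IsPrime] (hPQ : P < Q) :
    trdeg k (A ⧸ Q) + 1 ≤ trdeg k (A ⧸ P) := by
  obtain ⟨ι, x, hx⟩ := exists_isTranscendenceBasis' k (A ⧸ Q)
  let g := Ideal.Quotient.factorₐ k hPQ.le
  choose t ht using fun i ↦ Ideal.Quotient.factor_surjective hPQ.le (x i)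
  have hgt : AlgebraicIndependent k (g ∘ t) := (funext ht : g ∘ t = x) ▸ hx.1
  obtain ⟨a, haQ, haP⟩ := SetLike.exists_of_lt hPQ
  have hind : AlgebraicIndependent k (fun o : Option ι ↦ o.elim (Ideal.Quotient.mk P a) t) := by
    refine AlgebraicIndependent.option_iff.mpr ⟨hgt.of_comp g, ?_⟩
    refine transcendental_adjoin_of_map_eq_zero g hgt ?_ (Ideal.Quotient.eq_zero_iff_mem.mpr haQ)
    rwa [ne_eq, Ideal.Quotient.eq_zero_iff_mem]
  calc trdeg k (A ⧸ Q) + 1 = #(Option ι) := by rw [mk_option, hx.cardinalMk_eq_trdeg]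
    _ ≤ trdeg k (A ⧸ P) := hind.cardinalMk_le_trdeg

theorem LTSeries.length_le_trdeg (ch : LTSeries (PrimeSpectrum A)) :
    (ch.length : Cardinal) ≤ trdeg k (A ⧸ ch.head.asIdeal) := by
  induction ch using RelSeries.inductionOn with
  | singleton => simp
  | cons ch P hP ih =>
    calc ((ch.cons P hP).length : Cardinal) = ch.length + 1 := by simp
      _ ≤ trdeg k (A ⧸ ch.head.asIdeal) + 1 := by gcongr
      _ ≤ trdeg k (A ⧸ (ch.cons P hP).head.asIdeal) := by
        rw [RelSeries.head_cons]
        exact trdeg_quotient_add_one_le hP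

theorem ringKrullDim_le_of_forall_trdeg_le (n : ℕ)
    (h : ∀ P : Ideal A, P.IsPrime → trdeg k (A ⧸ P) ≤ n) : ringKrullDim A ≤ n :=
  iSup_le fun ch ↦ by exact_mod_cast (ch.length_le_trdeg (k := k)).trans (h _ ch.head.isPrime)

theorem ringKrullDim_quotient_le_of_forall_trdeg_le (I : Ideal A) (n : ℕ)
    (h : ∀ Q : Ideal A, Q.IsPrime → I ≤ Q → trdeg k (A ⧸ Q) ≤ n) :
    ringKrullDim (A ⧸ I) ≤ n := by
  refine ringKrullDim_le_of_forall_trdeg_le (k := k) n fun P hP ↦ ?_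
  let Q := P.comap (Ideal.Quotient.mk I)
  have hQI : I ≤ Q := fun a ha ↦ by simp [Q, Ideal.Quotient.eq_zero_iff_mem.mpr ha]
  let φ := Ideal.quotientMapₐ P (Ideal.Quotient.mkₐ k I) le_rfl
  refine (trdeg_le_of_surjective φ ?_).trans (h Q (hP.comap _) hQI)
  exact Ideal.quotientMap_surjective (H := le_rfl) Ideal.Quotient.mk_surjective

theorem isAlgebraic_adjoin_of_mem [Nontrivial A] {s : Set A} {a : A} (ha : a ∈ s) :
    IsAlgebraic (adjoin k s) a :=
  isAlgebraic_algebraMap (⟨a, subset_adjoin ha⟩ : adjoin k s)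

theorem trdeg_quotient_le_of_isAlgebraic_X {σ : Type*} (Q : Ideal (MvPolynomial σ k))
    [Q.IsPrime] (s : Set (MvPolynomial σ k ⧸ Q))
    (h : ∀ v, IsAlgebraic (adjoin k s) (Ideal.Quotient.mk Q (X v))) :
    trdeg k (MvPolynomial σ k ⧸ Q) ≤ #s := by
  have : Algebra.IsAlgebraic (adjoin k s) (MvPolynomial σ k ⧸ Q) := by
    refine ⟨fun z ↦ ?_⟩
    obtain ⟨f, rfl⟩ := Ideal.Quotient.mk_surjective z
    induction f using MvPolynomial.induction_on with
    | C a => exact isAlgebraic_algebraMap (algebraMap k (adjoin k s) a)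
    | add f g hf hg => rw [map_add]; exact hf.add hg
    | mul_X f v hf => rw [map_mul]; exact hf.mul (h v)
  exact Algebra.IsAlgebraic.trdeg_le_cardinalMk k s

end TranscendenceDegree

theorem ringKrullDim_add_one_le_quotient_ker {A D S : Type*} [CommRing A] [CommRing D]
    [IsDomain D] [CommRing S] (f : A →+* D) (g : D →+* S) (hgf : Function.Surjective (g.comp f))
    {a : A} (ha : f a ≠ 0) (hga : g (f a) = 0) :
    ringKrullDim S + 1 ≤ ringKrullDim (A ⧸ RingHom.ker f) := by
  have := RingHom.ker_isPrime f
  refine ringKrullDim_succ_le_of_surjective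
    (Ideal.Quotient.lift _ (g.comp f) fun x hx ↦ by simp [RingHom.mem_ker.mp hx])
    (Ideal.Quotient.lift_surjective_of_surjective _ _ hgf) (r := Ideal.Quotient.mk _ a) ?_ hga
  refine mem_nonZeroDivisors_of_ne_zero ?_
  rwa [ne_eq, Ideal.Quotient.eq_zero_iff_mem, RingHom.mem_ker]

section Window

variable {k : Type*} [Field k]

variable (k) in
noncomputable def windowIdeal (r p m : ℕ) :
    Ideal (MvPolynomial (Fin (r + 1) ⊕ Fin (r + 1)) k) :=
  Ideal.span {f |
    (∃ a : Fin (r + 1), (a : ℕ) < p ∧ f = X (Sum.inl a)) ∨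
    (∃ b : Fin (r + 1), m + p + 1 ≤ (b : ℕ) ∧ f = X (Sum.inr b)) ∨
    (∃ j l : Fin (r + 1), p ≤ (j : ℕ) ∧ (j : ℕ) ≤ m + p ∧
      p ≤ (l : ℕ) ∧ (l : ℕ) ≤ m + p ∧
      f = X (Sum.inl j) * X (Sum.inr l) - X (Sum.inl l) * X (Sum.inr j))}

namespace windowIdeal

variable {r p m : ℕ}

theorem X_inl_mem {a : Fin (r + 1)} (ha : (a : ℕ) < p) :
    X (Sum.inl a) ∈ windowIdeal k r p m :=
  Ideal.subset_span (Or.inl ⟨a, ha, rfl⟩)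

theorem X_inr_mem {b : Fin (r + 1)} (hb : m + p + 1 ≤ (b : ℕ)) :
    X (Sum.inr b) ∈ windowIdeal k r p m :=
  Ideal.subset_span (Or.inr (Or.inl ⟨b, hb, rfl⟩))

theorem minor_mem {j l : Fin (r + 1)} (hj : p ≤ (j : ℕ)) (hj' : (j : ℕ) ≤ m + p)
    (hl : p ≤ (l : ℕ)) (hl' : (l : ℕ) ≤ m + p) :
    X (Sum.inl j) * X (Sum.inr l) - X (Sum.inl l) * X (Sum.inr j) ∈ windowIdeal k r p m :=
  Ideal.subset_span (Or.inr (Or.inr ⟨j, l, hj, hj', hl, hl', rfl⟩))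

variable {Q : Ideal (MvPolynomial (Fin (r + 1) ⊕ Fin (r + 1)) k)} [Q.IsPrime]

theorem isAlgebraic_of_X_mem {s : Set (MvPolynomial (Fin (r + 1) ⊕ Fin (r + 1)) k ⧸ Q)} {v}
    (hv : X v ∈ Q) : IsAlgebraic (adjoin k s) (Ideal.Quotient.mk Q (X v)) := by
  rw [Ideal.Quotient.eq_zero_iff_mem.mpr hv]
  exact isAlgebraic_zero

theorem trdeg_quotient_le_of_X_inl_mem (hQ : windowIdeal k r p m ≤ Q)
    (hx : ∀ j : Fin (r + 1), p ≤ (j : ℕ) → (j : ℕ) ≤ m + p → X (Sum.inl j) ∈ Q) :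
    trdeg k (MvPolynomial (Fin (r + 1) ⊕ Fin (r + 1)) k ⧸ Q) ≤ r + 1 := by
  let f : Fin (r + 1) → _ ⧸ Q := fun i ↦
    Ideal.Quotient.mk Q (X (if (i : ℕ) ≤ m + p then Sum.inr i else Sum.inl i))
  have hf i : IsAlgebraic (adjoin k (Set.range f)) (f i) := isAlgebraic_adjoin_of_mem ⟨i, rfl⟩
  refine (trdeg_quotient_le_of_isAlgebraic_X Q (Set.range f) ?_).trans
    (by simpa using Cardinal.mk_range_le_lift (f := f))
  rintro (a | b)
  · by_cases ha : (a : ℕ) ≤ m + p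
    · by_cases ha' : p ≤ (a : ℕ)
      · exact isAlgebraic_of_X_mem (hx a ha' ha)
      · exact isAlgebraic_of_X_mem (hQ (X_inl_mem (by omega)))
    · simpa [f, ha] using hf a
  · by_cases hb : (b : ℕ) ≤ m + p
    · simpa [f, hb] using hf b
    · exact isAlgebraic_of_X_mem (hQ (X_inr_mem (by omega)))

theorem trdeg_quotient_le_of_X_inl_notMem (hQ : windowIdeal k r p m ≤ Q) {j : Fin (r + 1)}
    (hj : p ≤ (j : ℕ)) (hj' : (j : ℕ) ≤ m + p) (hxj : X (Sum.inl j) ∉ Q) :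
    trdeg k (MvPolynomial (Fin (r + 1) ⊕ Fin (r + 1)) k ⧸ Q) ≤ r + 2 := by
  let f : Option (Fin (r + 1)) → _ ⧸ Q := fun o ↦ Ideal.Quotient.mk Q
    (X (o.elim (Sum.inr j) fun i ↦ if (i : ℕ) < p then Sum.inr i else Sum.inl i))
  have hf o : IsAlgebraic (adjoin k (Set.range f)) (f o) := isAlgebraic_adjoin_of_mem ⟨o, rfl⟩
  refine (trdeg_quotient_le_of_isAlgebraic_X Q (Set.range f) ?_).trans
    (by simpa [add_assoc, one_add_one_eq_two] using Cardinal.mk_range_le_lift (f := f))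
  rintro (a | b)
  · by_cases ha : (a : ℕ) < p
    · exact isAlgebraic_of_X_mem (hQ (X_inl_mem ha))
    · simpa [f, ha] using hf a
  · by_cases hb : (b : ℕ) < p
    · simpa [f, hb] using hf b
    by_cases hb' : (b : ℕ) ≤ m + p
    · -- `y_b` is a root of `x_j T - x_b y_j`, whose leading coefficient `x_j` is nonzero
      have hminor : Ideal.Quotient.mk Q (X (Sum.inl j) * X (Sum.inr b)) =
          Ideal.Quotient.mk Q (X (Sum.inl b) * X (Sum.inr j)) :=
        Ideal.Quotient.eq.mpr (hQ (minor_mem hj hj' (not_lt.mp hb) hb'))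
      have hxj_ne : Ideal.Quotient.mk Q (X (Sum.inl j)) ≠ 0 :=
        mt Ideal.Quotient.eq_zero_iff_mem.mp hxj
      have hxj_alg : IsAlgebraic (adjoin k (Set.range f)) (Ideal.Quotient.mk Q (X (Sum.inl j))) :=
        by simpa [f, hj.not_gt] using hf (some j)
      have hxb_alg : IsAlgebraic (adjoin k (Set.range f)) (Ideal.Quotient.mk Q (X (Sum.inl b))) :=
        by simpa [f, hb] using hf (some b)
      refine hxj_alg.of_mul (mem_nonZeroDivisors_of_ne_zero hxj_ne) ?_
      rw [← map_mul, hminor, map_mul]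
      exact hxb_alg.mul (hf none)
    · exact isAlgebraic_of_X_mem (hQ (X_inr_mem (by omega)))

theorem trdeg_quotient_le (hQ : windowIdeal k r p m ≤ Q) :
    trdeg k (MvPolynomial (Fin (r + 1) ⊕ Fin (r + 1)) k ⧸ Q) ≤ r + 2 := by
  by_cases hx : ∀ j : Fin (r + 1), p ≤ (j : ℕ) → (j : ℕ) ≤ m + p → X (Sum.inl j) ∈ Q
  · exact (trdeg_quotient_le_of_X_inl_mem hQ hx).trans (by gcongr; norm_num)
  · push Not at hx
    obtain ⟨j, hj, hj', hxj⟩ := hx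
    exact trdeg_quotient_le_of_X_inl_notMem hQ hj hj' hxj

end windowIdeal

variable (k) in
noncomputable def windowParam (r m : ℕ) :
    MvPolynomial (Fin (r + 1) ⊕ Fin (r + 1)) k →ₐ[k] MvPolynomial (Option (Fin (r + 1))) k :=
  aeval <| Sum.elim (fun a ↦ X (some a))
    fun b ↦ if (b : ℕ) ≤ m then X none * X (some b) else 0

theorem windowIdeal_zero_le_ker_windowParam (r m : ℕ) :
    windowIdeal k r 0 m ≤ RingHom.ker (windowParam k r m) := by
  rw [windowIdeal, Ideal.span_le]
  rintro f (⟨a, ha, rfl⟩ | ⟨b, hb, rfl⟩ | ⟨j, l, -, hj, -, hl, rfl⟩)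
  · exact absurd ha (Nat.not_lt_zero _)
  · simp [windowParam, show ¬(b : ℕ) ≤ m by omega]
  · simp only [SetLike.mem_coe, RingHom.mem_ker, windowParam, map_sub, map_mul, aeval_X,
      Sum.elim_inl, Sum.elim_inr]
    rw [if_pos (by omega), if_pos (by omega)]
    ring

theorem le_ringKrullDim_quotient_ker_windowParam (r m : ℕ) :
    ((r + 2 : ℕ) : WithBot ℕ∞) ≤ ringKrullDim
      (MvPolynomial (Fin (r + 1) ⊕ Fin (r + 1)) k ⧸ RingHom.ker (windowParam k r m)) := by
  let g : MvPolynomial (Option (Fin (r + 1))) k →ₐ[k] MvPolynomial (Fin (r + 1)) k :=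
    aeval fun o ↦ o.elim 0 X
  have hsection : (g.comp (windowParam k r m)).comp (rename Sum.inl) = AlgHom.id k _ :=
    algHom_ext fun a ↦ by simp [g, windowParam]
  have hsurj : Function.Surjective (g.comp (windowParam k r m)) := fun q ↦
    ⟨rename Sum.inl q, congrArg (· q) hsection⟩
  have h := ringKrullDim_add_one_le_quotient_ker (windowParam k r m).toRingHom g.toRingHom hsurj
    (a := X (Sum.inr 0)) (by simp [windowParam, X_ne_zero]) (by simp [windowParam, g])
  rw [MvPolynomial.ringKrullDim_of_isNoetherianRing, ringKrullDim_eq_zero_of_field] at h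
  refine le_of_eq_of_le ?_ h
  simp only [Nat.card_eq_fintype_card, Fintype.card_fin, zero_add]
  push_cast
  ring

end Window

theorem union_quotient_krullDim_general (k : Type*) [Field k] (r n : ℕ)
    (m : Fin (n + 1) → ℕ)
    (p : Fin (n + 1) → ℕ) (hp0 : p 0 = 0)
    (J : Fin (n + 1) → Ideal (MvPolynomial (Fin (r + 1) ⊕ Fin (r + 1)) k))
    (hJ : ∀ i, J i = Ideal.span {f |
      (∃ a : Fin (r + 1), (a : ℕ) < p i ∧ f = X (Sum.inl a)) ∨
      (∃ b : Fin (r + 1), m i + p i + 1 ≤ (b : ℕ) ∧ f = X (Sum.inr b)) ∨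
      (∃ j l : Fin (r + 1), p i ≤ (j : ℕ) ∧ (j : ℕ) ≤ m i + p i ∧
        p i ≤ (l : ℕ) ∧ (l : ℕ) ≤ m i + p i ∧
        f = X (Sum.inl j) * X (Sum.inr l) - X (Sum.inl l) * X (Sum.inr j))}) :
    ringKrullDim (MvPolynomial (Fin (r + 1) ⊕ Fin (r + 1)) k ⧸ (⨅ i, J i))
      = ((r + 2 : ℕ) : WithBot (WithTop ℕ)) := by
  have hJ : ∀ i, J i = windowIdeal k r (p i) (m i) := hJ
  apply le_antisymm
  · refine ringKrullDim_quotient_le_of_forall_trdeg_le (k := k) _ (r + 2) fun Q hQ hle ↦ ?_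
    obtain ⟨i, -, hi⟩ := hQ.inf_le'.mp ((Finset.inf_univ_eq_iInf J).trans_le hle)
    exact_mod_cast windowIdeal.trdeg_quotient_le (hJ i ▸ hi)
  · have hker : ⨅ i, J i ≤ RingHom.ker (windowParam k r (m 0)) := by
      refine (iInf_le J 0).trans ?_
      rw [hJ 0, hp0]
      exact windowIdeal_zero_le_ker_windowParam r (m 0)
    exact (le_ringKrullDim_quotient_ker_windowParam r (m 0)).trans
      (ringKrullDim_le_of_surjective _ (Ideal.Quotient.factor_surjective hker))

/-- In `R = k[x_0,…,x_r, y_0,…,y_r]`, with `J_i` the ideal generated by the variables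
`x_a` for `a < p_i`, the variables `y_b` for `m_i + p_i + 1 ≤ b ≤ r`, and the binomials
`x_j y_ℓ − x_ℓ y_j` for `p_i ≤ j, ℓ ≤ m_i + p_i`, the Krull dimension of
`R/(J_0 ∩ ⋯ ∩ J_n)` is `r + 2`. -/
theorem union_quotient_krullDim (k : Type*) [Field k] (r n : ℕ)
    (m : Fin (n + 1) → ℕ) (hm : (∑ i, (m i + 1)) ≤ r + 1)
    (p : Fin (n + 1) → ℕ) (hp0 : p 0 = 0)
    (hp : ∀ i : Fin n, p i.succ = p i.castSucc + m i.castSucc + 1)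
    (J : Fin (n + 1) → Ideal (MvPolynomial (Fin (r + 1) ⊕ Fin (r + 1)) k))
    (hJ : ∀ i, J i = Ideal.span {f |
      (∃ a : Fin (r + 1), (a : ℕ) < p i ∧ f = X (Sum.inl a)) ∨
      (∃ b : Fin (r + 1), m i + p i + 1 ≤ (b : ℕ) ∧ f = X (Sum.inr b)) ∨
      (∃ j l : Fin (r + 1), p i ≤ (j : ℕ) ∧ (j : ℕ) ≤ m i + p i ∧
        p i ≤ (l : ℕ) ∧ (l : ℕ) ≤ m i + p i ∧
        f = X (Sum.inl j) * X (Sum.inr l) - X (Sum.inl l) * X (Sum.inr j))}) :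
    ringKrullDim (MvPolynomial (Fin (r + 1) ⊕ Fin (r + 1)) k ⧸ (⨅ i, J i))
      = ((r + 2 : ℕ) : WithBot (WithTop ℕ)) :=
  union_quotient_krullDim_general k r n m p hp0 J hJ
end

section
/- Let r and n be natural numbers with n ≥ 0, and let m_0,…,m_n be natural numbers with Σ_{i=0}^{n}(m_i+1) ≤ r+1. Define p_0 = 0, p_i = p_{i−1} + m_{i−1} + 1 for i = 1,…,n, and q_i = r − m_i − p_i for i = 0,…,n. Then for all natural numbers s, t, the following identity holds in the integers: Σ_{i=0}^{n} [ Σ_{ℓ=0}^{m_i} C(s+q_i+ℓ, q_i+ℓ)·C(t+p_i+m_i−ℓ, p_i+m_i−ℓ) − Σ_{ℓ=0}^{m_i−1} C(s+q_i+ℓ, q_i+ℓ)·C(t+p_i+m_i−1−ℓ, p_i+m_i−1−ℓ) ] − Σ_{i=1}^{n} C(s+r−p_i, r−p_i)·C(t+p_i−1, p_i−1) = Σ_{ℓ=0}^{p_n+m_n} C(s+r−ℓ, r−ℓ)·C(t+ℓ, ℓ) − Σ_{ℓ=0}^{p_n+m_n−1} C(s+r−1−ℓ, r−1−ℓ)·C(t+ℓ,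 ℓ). -/
/-!
After reflecting the summation index, the `i`-th bracket becomes
`Σ_{j ∈ [p_i, p_i + m_i]} h(r - j, j) - Σ_{j ∈ [p_i, p_i + m_i)} h(r - 1 - j, j)`, where
`h(a, b) = C(s+a, a)·C(t+b, b)` is the Hilbert polynomial of `P^a × P^b`. The blocks
`[p_i, p_i + m_i]` tile `[0, p_n + m_n]`, and the correction term of the `i`-th intersection is
exactly the missing summand `h(r - 1 - j, j)` at the gap `j = p_i - 1` between two half-open blocks,
so both sums telescope into the right-hand side. The bound `Σ (m_i + 1) ≤ r + 1` guarantees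
`p_i + m_i ≤ r`, so that none of the truncated subtractions is degenerate.
-/

open Finset

/-- The bivariate Hilbert polynomial of `P^a × P^b`, evaluated at `(s, t)`. -/
def hilbertPolyProdProj (a b s t : ℕ) : ℤ := ((s + a).choose a * (t + b).choose b : ℤ)

theorem sum_range_hilbertPolyProdProj_reflect (s t : ℕ) {q b k R : ℕ} (h : q + b + k - 1 = R) :
    ∑ ℓ ∈ range k, hilbertPolyProdProj (q + ℓ) (b + k - 1 - ℓ) s t
      = ∑ ℓ ∈ range k, hilbertPolyProdProj (R - (b + ℓ)) (b + ℓ) s t := by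
  rw [← sum_range_reflect]
  refine sum_congr rfl fun ℓ hℓ => ?_
  have := mem_range.1 hℓ
  congr 1 <;> omega

section Blocks

variable {n : ℕ} {p m : Fin (n + 1) → ℕ}

theorem sum_sum_range_blocks {M : Type*} [AddCommMonoid M] (f : ℕ → M) (hp0 : p 0 = 0)
    (hp : ∀ i : Fin n, p i.succ = p i.castSucc + m i.castSucc + 1) :
    ∑ i, ∑ ℓ ∈ range (m i + 1), f (p i + ℓ)
      = ∑ j ∈ range (p (Fin.last n) + m (Fin.last n) + 1), f j := by
  induction n with
  | zero => simp [Fin.last, hp0]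
  | succ n ih =>
    rw [Fin.sum_univ_castSucc,
      ih (p := fun i => p i.castSucc) (m := fun i => m i.castSucc) hp0 fun i => hp i.castSucc,
      ← Fin.succ_last, hp (Fin.last n), ← sum_range_add, add_assoc (_ + _ + 1)]

theorem sum_sum_range_blocks_add_sum_gaps {M : Type*} [AddCancelCommMonoid M] (g : ℕ → M)
    (hp0 : p 0 = 0) (hp : ∀ i : Fin n, p i.succ = p i.castSucc + m i.castSucc + 1) :
    ∑ i, ∑ ℓ ∈ range (m i), g (p i + ℓ) + ∑ i : Fin n, g (p i.succ - 1)
      = ∑ j ∈ range (p (Fin.last n) + m (Fin.last n)), g j := by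
  have hgap (i : Fin n) : p i.succ - 1 = p i.castSucc + m i.castSucc := by
    have := hp i
    omega
  have := sum_sum_range_blocks g hp0 hp
  simp only [sum_range_succ, sum_add_distrib, Fin.sum_univ_castSucc (f := fun i => g (p i + m i))]
    at this
  simp only [hgap]
  exact add_right_cancel (by rwa [add_assoc])

theorem last_add_last_add_one_eq_sum (hp0 : p 0 = 0)
    (hp : ∀ i : Fin n, p i.succ = p i.castSucc + m i.castSucc + 1) :
    p (Fin.last n) + m (Fin.last n) + 1 = ∑ i, (m i + 1) := by
  simpa using (sum_sum_range_blocks (M := ℕ) (fun _ => 1) hp0 hp).symm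

theorem strictMono_add_of_succ (hp : ∀ i : Fin n, p i.succ = p i.castSucc + m i.castSucc + 1) :
    StrictMono fun i => p i + m i :=
  Fin.strictMono_iff_lt_succ.2 fun i => by
    have := hp i
    omega

end Blocks

/-- The inclusion–exclusion identity for the bivariate Hilbert polynomials of the
components `Q_i` of the degeneration of the diagonal in `P^r × P^r`:
`Σ_{i=0}^{n} [Σ_{ℓ=0}^{m_i} C(s+q_i+ℓ, q_i+ℓ)·C(t+p_i+m_i−ℓ, p_i+m_i−ℓ)
              − Σ_{ℓ=0}^{m_i−1} C(s+q_i+ℓ, q_i+ℓ)·C(t+p_i+m_i−1−ℓ, p_i+m_i−1−ℓ)]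
 − Σ_{i=1}^{n} C(s+r−p_i, r−p_i)·C(t+p_i−1, p_i−1)
 = Σ_{ℓ=0}^{p_n+m_n} C(s+r−ℓ, r−ℓ)·C(t+ℓ, ℓ)
   − Σ_{ℓ=0}^{p_n+m_n−1} C(s+r−1−ℓ, r−1−ℓ)·C(t+ℓ, ℓ)` in the integers. -/
theorem hilbert_inclusion_exclusion (r n : ℕ)
    (m : Fin (n + 1) → ℕ) (hm : (∑ i, (m i + 1)) ≤ r + 1)
    (p q : Fin (n + 1) → ℕ) (hp0 : p 0 = 0)
    (hp : ∀ i : Fin n, p i.succ = p i.castSucc + m i.castSucc + 1)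
    (hq : ∀ i, q i = r - m i - p i)
    (s t : ℕ) :
    (∑ i : Fin (n + 1),
        ((∑ ℓ ∈ Finset.range (m i + 1),
            ((s + (q i + ℓ)).choose (q i + ℓ)
              * (t + (p i + m i - ℓ)).choose (p i + m i - ℓ) : ℤ))
          - ∑ ℓ ∈ Finset.range (m i),
            ((s + (q i + ℓ)).choose (q i + ℓ)
              * (t + (p i + m i - 1 - ℓ)).choose (p i + m i - 1 - ℓ) : ℤ)))
      - ∑ i : Fin n,
          ((s + (r - p i.succ)).choose (r - p i.succ)
            * (t + (p i.succ - 1)).choose (p i.succ - 1) : ℤ)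
      = (∑ ℓ ∈ Finset.range (p (Fin.last n) + m (Fin.last n) + 1),
          ((s + (r - ℓ)).choose (r - ℓ) * (t + ℓ).choose ℓ : ℤ))
        - ∑ ℓ ∈ Finset.range (p (Fin.last n) + m (Fin.last n)),
          ((s + (r - 1 - ℓ)).choose (r - 1 - ℓ) * (t + ℓ).choose ℓ : ℤ) := by
  have hbound (i : Fin (n + 1)) : p i + m i ≤ r := by
    have := (strictMono_add_of_succ hp).monotone (Fin.le_last i)
    have := last_add_last_add_one_eq_sum hp0 hp
    omega
  have hfull (i : Fin (n + 1)) := sum_range_hilbertPolyProdProj_reflect s t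
    (q := q i) (b := p i) (k := m i + 1) (R := r) (by have := hq i; have := hbound i; omega)
  have hhalf (i : Fin (n + 1)) := sum_range_hilbertPolyProdProj_reflect s t
    (q := q i) (b := p i) (k := m i) (R := r - 1) (by have := hq i; have := hbound i; omega)
  simp only [← add_assoc, add_tsub_cancel_right] at hfull
  have hgap (i : Fin n) : hilbertPolyProdProj (r - p i.succ) (p i.succ - 1) s t
      = hilbertPolyProdProj (r - 1 - (p i.succ - 1)) (p i.succ - 1) s t := by
    have := hp i
    congr 1
    omega
  change ∑ i, (∑ ℓ ∈ range (m i + 1), hilbertPolyProdProj (q i + ℓ) (p i + m i - ℓ) s t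
      - ∑ ℓ ∈ range (m i), hilbertPolyProdProj (q i + ℓ) (p i + m i - 1 - ℓ) s t)
      - ∑ i : Fin n, hilbertPolyProdProj (r - p i.succ) (p i.succ - 1) s t = _
  simp only [hfull, hhalf, hgap, sum_sub_distrib, sub_sub,
    sum_sum_range_blocks (fun j => hilbertPolyProdProj (r - j) j s t) hp0 hp,
    sum_sum_range_blocks_add_sum_gaps (fun j => hilbertPolyProdProj (r - 1 - j) j s t) hp0 hp]
  rfl
end

section
/- Let k be a field and d, r natural numbers. For i = 0,…,d let V_i be a finite-dimensional k-vector space of dimension r+1; for i = 0,…,d−1 let a_i : V_i → V_{i+1} and b_i : V_{i+1} → V_i be linear maps; and for i = 0,…,d let Y_i and Z_i be subspaces of V_i. Assume: (1) Y_i ∩ Z_i = 0 for all i; (2) Y_0 = 0 and Z_d = 0; (3) for each i = 0,…,d−1, the range of a_i equals Y_{i+1}, the kernel of b_i equals Y_{i+1}, the range of b_i equals Z_i, and the kernel of a_i equals Z_i. Then there exist a nondecreasing sequence n_0 ≤ n_1 ≤ ⋯ ≤ n_r of indices in {0,…,d} and vectors s_0,…,s_r with s_j ∈ V_{n_j}, such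 that for each i = 0,…,d: (a) the family (t_{i,0},…,t_{i,r}) is a basis of V_i, where t_{i,j} denotes the image of s_j in V_i under the composite a_{i−1}∘⋯∘a_{n_j} when i ≥ n_j, and under the composite b_i∘⋯∘b_{n_j−1} when i < n_j; and (b) the images in the quotient V_i/(Y_i + Z_i) of those s_j with n_j = i form a basis of V_i/(Y_i + Z_i). -/
/-!
Choose a complement `W_i` of `Y_i ⊕ Z_i` in `V_i` and lift a basis of `V_i/(Y_i + Z_i)` into
`W_i`. Exactness gives `dim W_i = dim Y_{i+1} - dim Y_i`, so there are `r + 1` lifts in all; listing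
them level by level gives `n` and `s`. As `ker a_i = Z_i`, the map `a_i` is injective on
`Y_i ⊕ W_i` and sends it into `Y_{i+1}`, which meets `W_{i+1}` trivially; so inductively the
`t_{i,j}` with `n_j ≤ i` are independent in `Y_i ⊕ W_i`, and symmetrically (with `b`) those with
`n_j ≥ i` are independent in `Z_i ⊕ W_i`. At level `i` the first family and the `b_i`-image of the
second, which lies in `Z_i`, are independent together, hence a basis by counting.
-/

section Transfer

variable {k : Type*} [Field k] (V : ℕ → Type*) [∀ i, AddCommGroup (V i)] [∀ i, Module k (V i)]

/-- Cast along an equality of indices. -/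
def castLM : {α β : ℕ} → α = β → V α →ₗ[k] V β
  | _, _, rfl => LinearMap.id

/-- The forward composite `a_{n+m-1} ∘ ⋯ ∘ a_n : V n → V (n+m)`. -/
def iterF (a : ∀ i, V i →ₗ[k] V (i + 1)) : (n j : ℕ) → (V n →ₗ[k] V (n + j))
  | _, 0 => LinearMap.id
  | n, j + 1 => (a (n + j)).comp (iterF a n j)

/-- The backward composite `b_n ∘ ⋯ ∘ b_{n+m-1} : V (n+m) → V n`. -/
def iterB (b : ∀ i, V (i + 1) →ₗ[k] V i) : (n j : ℕ) → (V (n + j) →ₗ[k] V n)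
  | _, 0 => LinearMap.id
  | n, j + 1 => (iterB b n j).comp (b (n + j))

/-- The transfer map `V n → V i`: the composite `a_{i−1} ∘ ⋯ ∘ a_n` when `n ≤ i`, and the
composite `b_i ∘ ⋯ ∘ b_{n−1}` when `i < n`. -/
def transfer (a : ∀ i, V i →ₗ[k] V (i + 1)) (b : ∀ i, V (i + 1) →ₗ[k] V i) (n i : ℕ) :
    V n →ₗ[k] V i :=
  if h : n ≤ i then (castLM V (Nat.add_sub_cancel' h)).comp (iterF V a n (i - n))
  else (iterB V b i (n - i)).comp
    (castLM V (Nat.add_sub_cancel' (Nat.le_of_not_le h)).symm)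

end Transfer

open Submodule

theorem Disjoint.disjoint_sup_of_isCompl {α : Type*} [Lattice α] [BoundedOrder α]
    [IsModularLattice α] {x y z : α} (hxy : Disjoint x y) (h : IsCompl (x ⊔ y) z) :
    Disjoint (x ⊔ z) y :=
  (hxy.symm.disjoint_sup_right_of_disjoint_sup_left (sup_comm x y ▸ h.disjoint)).symm

theorem LinearIndepOn.union_map {R M M' ι : Type*} [Ring R] [AddCommGroup M] [Module R M]
    [AddCommGroup M'] [Module R M'] {f : M →ₗ[R] M'} {v : ι → M} {w : ι → M'} {s t : Set ι}
    {A : Submodule R M} {B : Submodule R M'}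
    (hv : LinearIndepOn R v s) (hvA : Set.MapsTo v s A) (hA : Disjoint A (LinearMap.ker f))
    (hwv : Set.EqOn w (f ∘ v) s)
    (hw : LinearIndepOn R w t) (hwB : Set.MapsTo w t B) (hB : Disjoint (LinearMap.range f) B) :
    LinearIndepOn R w (s ∪ t) ∧
      Set.MapsTo w (s ∪ t) (LinearMap.range f ⊔ B : Submodule R M') := by
  have hws : Set.MapsTo w s (LinearMap.range f) := fun j hj => hwv hj ▸ f.mem_range_self (v j)
  have hfv : LinearIndepOn R (f ∘ v) s := LinearIndependent.map hv <| hA.mono_left <| by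
    rw [← Set.image_eq_range]
    exact span_le.2 hvA.image_subset
  refine ⟨(hfv.congr hwv.symm).union hw
      (hB.mono (span_le.2 hws.image_subset) (span_le.2 hwB.image_subset)),
    (hws.mono_right (le_sup_left : _ ≤ _ ⊔ B)).union (hwB.mono_right (le_sup_right : B ≤ _))⟩

section TransferLemmas

variable {k : Type*} [Field k] {V : ℕ → Type*} [∀ i, AddCommGroup (V i)] [∀ i, Module k (V i)]
  (a : ∀ i, V i →ₗ[k] V (i + 1)) (b : ∀ i, V (i + 1) →ₗ[k] V i)

theorem transfer_add_right (n j : ℕ) : transfer V a b n (n + j) = iterF V a n j := by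
  have key : ∀ {j'} (h : n + j' = n + j), j' = j →
      (castLM V h).comp (iterF V a n j') = iterF V a n j := by
    rintro _ _ rfl; rfl
  exact (dif_pos (Nat.le_add_right n j)).trans (key _ (Nat.add_sub_cancel_left ..))

theorem transfer_self (n : ℕ) : transfer V a b n n = LinearMap.id :=
  transfer_add_right a b n 0

theorem transfer_add_left (i j : ℕ) : transfer V a b (i + j) i = iterB V b i j := by
  rcases j with _ | j
  · exact transfer_self a b i
  have key : ∀ {j'} (h : i + (j + 1) = i + j'), j' = j + 1 →
      (iterB V b i j').comp (castLM V h) = iterB V b i (j + 1) := by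
    rintro _ _ rfl; rfl
  exact (dif_neg (by omega)).trans (key _ (Nat.add_sub_cancel_left ..))

theorem transfer_succ_of_le {n i : ℕ} (h : n ≤ i) :
    transfer V a b n (i + 1) = (a i).comp (transfer V a b n i) := by
  obtain ⟨e, rfl⟩ := Nat.exists_eq_add_of_le h
  rw [transfer_add_right]
  exact transfer_add_right a b n (e + 1)

theorem transfer_succ_left_of_le {n i : ℕ} (h : i ≤ n) :
    transfer V a b (n + 1) i = (transfer V a b n i).comp (b n) := by
  obtain ⟨e, rfl⟩ := Nat.exists_eq_add_of_le h
  rw [transfer_add_left]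
  exact transfer_add_left a b i (e + 1)

theorem transfer_of_lt {n i : ℕ} (h : i < n) :
    transfer V a b n i = (b i).comp (transfer V a b n (i + 1)) := by
  induction n, h using Nat.le_induction with
  | base => rw [transfer_succ_left_of_le a b le_rfl, transfer_self, transfer_self]; rfl
  | succ n hn ih =>
    rw [transfer_succ_left_of_le a b (by omega), ih, transfer_succ_left_of_le a b hn]
    rfl

theorem transfer_eq_cast {n i : ℕ} (h : n = i) (x : V n) : transfer V a b n i x = h ▸ x := by
  subst h
  rw [transfer_self]
  rfl

end TransferLemmas

theorem Submodule.exists_isCompl_basis_mkQ {K V ι : Type*} [DivisionRing K] [AddCommGroup V]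
    [Module K V] (p : Submodule K V) (q : Module.Basis ι K (V ⧸ p)) :
    ∃ W : Submodule K V, IsCompl p W ∧ ∃ β : Module.Basis ι K W, ∀ t, p.mkQ (β t) = q t := by
  obtain ⟨W, hW⟩ := p.exists_isCompl
  exact ⟨W, hW, q.map (p.quotientEquivOfIsCompl W hW), fun t => by
    simp [mk_quotientEquivOfIsCompl_apply]⟩

theorem Submodule.finrank_quotient_sup_add_add {K V : Type*} [DivisionRing K] [AddCommGroup V]
    [Module K V] [FiniteDimensional K V] {p q : Submodule K V} (h : p ⊓ q = ⊥) :
    Module.finrank K (V ⧸ (p ⊔ q)) + Module.finrank K p + Module.finrank K q =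
      Module.finrank K V := by
  have := (p ⊔ q).finrank_quotient_add_finrank
  have := finrank_sup_add_finrank_inf_eq p q
  rw [h, finrank_bot] at this
  omega

theorem exists_monotone_card_fiber {d N : ℕ} (m : ℕ → ℕ)
    (hm : ∑ i ∈ Finset.range (d + 1), m i = N) :
    ∃ n : Fin N → ℕ, Monotone n ∧ (∀ j, n j ≤ d) ∧
      ∀ i ≤ d, Fintype.card {j // n j = i} = m i := by
  classical
  let ι := Σₗ i : Fin (d + 1), Fin (m i)
  have hcard : Fintype.card ι = N := by
    simp [ι, Fintype.card_sigma, Fin.sum_univ_eq_sum_range m (d + 1), hm]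
  let e := Fintype.orderIsoFinOfCardEq ι hcard
  refine ⟨fun j => (e j).1, fun j j' h => ?_, fun j => Nat.lt_succ_iff.mp (e j).1.2,
    fun i hi => ?_⟩
  · rcases Sigma.Lex.le_def.mp (e.monotone h) with h | ⟨h, -⟩
    · exact h.le
    · exact (congrArg Fin.val h).le
  · let i' : Fin (d + 1) := ⟨i, Nat.lt_succ_of_le hi⟩
    calc Fintype.card {j // ((e j).1 : ℕ) = i}
        = Fintype.card {x : Σ i : Fin (d + 1), Fin (m i) // x.1 = i'} :=
          Fintype.card_congr (e.toEquiv.subtypeEquiv fun j => by simp [i', Fin.ext_iff])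
      _ = m i := by simp [Fintype.card_congr (Equiv.sigmaSubtype i'), i']

theorem exists_monotone_sections {d N : ℕ} {V : ℕ → Type*} {m : ℕ → ℕ}
    (hm : ∑ i ∈ Finset.range (d + 1), m i = N) (β : ∀ i, Fin (m i) → V i) :
    ∃ (n : Fin N → ℕ) (s : ∀ j, V (n j)), Monotone n ∧ (∀ j, n j ≤ d) ∧
      ∀ i ≤ d, ∃ E : {j // n j = i} ≃ Fin (m i),
        ∀ x : {j // n j = i}, (x.2 ▸ s x.1 : V i) = β i (E x) := by
  obtain ⟨n, hmono, hnd, hcard⟩ := exists_monotone_card_fiber m hm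
  let E i (hi : i ≤ d) := Fintype.equivFinOfCardEq (hcard i hi)
  refine ⟨n, fun j => β (n j) (E (n j) (hnd j) ⟨j, rfl⟩), hmono, hnd, fun i hi => ⟨E i hi, ?_⟩⟩
  rintro ⟨j, rfl⟩
  rfl

section Diagonalization

variable {k : Type*} [Field k] {V : ℕ → Type*} [∀ i, AddCommGroup (V i)] [∀ i, Module k (V i)]
  {a : ∀ i, V i →ₗ[k] V (i + 1)} {b : ∀ i, V (i + 1) →ₗ[k] V i} {Y Z : ∀ i, Submodule k (V i)}
  {d : ℕ}

theorem sum_finrank_quotient_sup_eq [∀ i, FiniteDimensional k (V i)]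
    (hYZ : ∀ i ≤ d, Y i ⊓ Z i = ⊥) (hY0 : Y 0 = ⊥) (hZd : Z d = ⊥)
    (hra : ∀ i < d, LinearMap.range (a i) = Y (i + 1))
    (hka : ∀ i < d, LinearMap.ker (a i) = Z i) :
    ∑ i ∈ Finset.range (d + 1), Module.finrank k (V i ⧸ (Y i ⊔ Z i)) =
      Module.finrank k (V d) := by
  have hpartial : ∀ t ≤ d,
      ∑ i ∈ Finset.range t, Module.finrank k (V i ⧸ (Y i ⊔ Z i)) = Module.finrank k (Y t) := by
    intro t
    induction t with
    | zero => intro; rw [Finset.sum_range_zero, hY0, finrank_bot]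
    | succ t ih =>
      intro ht
      have hrank := (a t).finrank_range_add_finrank_ker
      rw [hra t ht, hka t ht] at hrank
      have := finrank_quotient_sup_add_add (hYZ t (by omega))
      rw [Finset.sum_range_succ, ih (by omega)]
      omega
  have := finrank_quotient_sup_add_add (hYZ d le_rfl)
  rw [Finset.sum_range_succ, hpartial d le_rfl, ← this, hZd, finrank_bot]
  ring

variable (a b) in
/-- The vectors `t_{i,j}` of the statement. -/
def transferFamily {ι : Type*} (n : ι → ℕ) (s : ∀ j, V (n j)) (i : ℕ) : ι → V i :=
  fun j => transfer V a b (n j) i (s j)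

variable {ι : Type*} {n : ι → ℕ} {s : ∀ j, V (n j)}

variable (a b) in
theorem linearIndepOn_transferFamily_fiber {κ : Type*} {i : ℕ} {W : Submodule k (V i)}
    (β : Module.Basis κ k W) (E : {j // n j = i} ≃ κ)
    (hE : ∀ x : {j // n j = i}, (x.2 ▸ s x.1 : V i) = β (E x)) :
    LinearIndepOn k (transferFamily a b n s i) {j | n j = i} ∧
      Set.MapsTo (transferFamily a b n s i) {j | n j = i} W := by
  have hT : ∀ x : {j // n j = i}, transferFamily a b n s i x = β (E x) := fun x =>
    (transfer_eq_cast a b x.2 _).trans (hE x)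
  refine ⟨?_, fun j hj => hT ⟨j, hj⟩ ▸ (β (E ⟨j, hj⟩)).2⟩
  show LinearIndependent k fun x : {j // n j = i} => transferFamily a b n s i x
  rw [funext hT]
  exact (β.linearIndependent.comp E E.injective).map' W.subtype W.ker_subtype

variable {W : ∀ i, Submodule k (V i)}

theorem linearIndepOn_transferFamily_le
    (hfib : ∀ i ≤ d, LinearIndepOn k (transferFamily a b n s i) {j | n j = i} ∧
      Set.MapsTo (transferFamily a b n s i) {j | n j = i} (W i))
    (hYZ : ∀ i ≤ d, Y i ⊓ Z i = ⊥) (hW : ∀ i ≤ d, IsCompl (Y i ⊔ Z i) (W i))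
    (hra : ∀ i < d, LinearMap.range (a i) = Y (i + 1))
    (hka : ∀ i < d, LinearMap.ker (a i) = Z i) :
    ∀ i ≤ d, LinearIndepOn k (transferFamily a b n s i) {j | n j ≤ i} ∧
      Set.MapsTo (transferFamily a b n s i) {j | n j ≤ i} (Y i ⊔ W i : Submodule k (V i)) := by
  intro i
  induction i with
  | zero =>
    intro h0
    have hfiber : {j | n j ≤ 0} = {j | n j = 0} := by simp
    rw [hfiber]
    exact ⟨(hfib 0 h0).1, (hfib 0 h0).2.mono_right (le_sup_right : W 0 ≤ _)⟩
  | succ i ih =>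
    intro (hi : i < d)
    have hsplit : {j | n j ≤ i + 1} = {j | n j ≤ i} ∪ {j | n j = i + 1} := by
      ext; simp only [Set.mem_ofPred_eq, Set.mem_union]; omega
    rw [hsplit, ← hra i hi]
    refine (ih hi.le).1.union_map (ih hi.le).2 ?_ (fun j hj => ?_) (hfib _ hi).1 (hfib _ hi).2 ?_
    · rw [hka i hi]
      exact (disjoint_iff.2 (hYZ i hi.le)).disjoint_sup_of_isCompl (hW i hi.le)
    · exact LinearMap.congr_fun (transfer_succ_of_le a b hj) (s j)
    · rw [hra i hi]
      exact (hW (i + 1) hi).disjoint.mono_left le_sup_left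

theorem linearIndepOn_transferFamily_ge
    (hfib : ∀ i ≤ d, LinearIndepOn k (transferFamily a b n s i) {j | n j = i} ∧
      Set.MapsTo (transferFamily a b n s i) {j | n j = i} (W i))
    (hnd : ∀ j, n j ≤ d)
    (hYZ : ∀ i ≤ d, Y i ⊓ Z i = ⊥) (hW : ∀ i ≤ d, IsCompl (Y i ⊔ Z i) (W i))
    (hkb : ∀ i < d, LinearMap.ker (b i) = Y (i + 1))
    (hrb : ∀ i < d, LinearMap.range (b i) = Z i) :
    ∀ i ≤ d, LinearIndepOn k (transferFamily a b n s i) {j | i ≤ n j} ∧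
      Set.MapsTo (transferFamily a b n s i) {j | i ≤ n j} (Z i ⊔ W i : Submodule k (V i)) := by
  intro i hi
  induction hi using Nat.decreasingInduction with
  | self =>
    have hfiber : {j | d ≤ n j} = {j | n j = d} := by
      ext j; simp only [Set.mem_ofPred_eq]; have := hnd j; omega
    rw [hfiber]
    exact ⟨(hfib d le_rfl).1, (hfib d le_rfl).2.mono_right (le_sup_right : W d ≤ _)⟩
  | of_succ i hi ih =>
    have hsplit : {j | i ≤ n j} = {j | i + 1 ≤ n j} ∪ {j | n j = i} := by
      ext; simp only [Set.mem_ofPred_eq, Set.mem_union]; omega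
    rw [hsplit, ← hrb i hi]
    refine ih.1.union_map ih.2 ?_ (fun j hj => ?_) (hfib _ hi.le).1 (hfib _ hi.le).2 ?_
    · rw [hkb i hi]
      exact (disjoint_iff.2 (inf_comm (Y _) _ ▸ hYZ (i + 1) hi)).disjoint_sup_of_isCompl
        (sup_comm (Y _) (Z _) ▸ hW (i + 1) hi)
    · exact LinearMap.congr_fun (transfer_of_lt a b hj) (s j)
    · rw [hrb i hi]
      exact (hW i hi.le).disjoint.mono_left le_sup_right

theorem linearIndependent_transferFamily
    (hfib : ∀ i ≤ d, LinearIndepOn k (transferFamily a b n s i) {j | n j = i} ∧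
      Set.MapsTo (transferFamily a b n s i) {j | n j = i} (W i))
    (hnd : ∀ j, n j ≤ d)
    (hYZ : ∀ i ≤ d, Y i ⊓ Z i = ⊥) (hW : ∀ i ≤ d, IsCompl (Y i ⊔ Z i) (W i))
    (hra : ∀ i < d, LinearMap.range (a i) = Y (i + 1))
    (hkb : ∀ i < d, LinearMap.ker (b i) = Y (i + 1))
    (hrb : ∀ i < d, LinearMap.range (b i) = Z i)
    (hka : ∀ i < d, LinearMap.ker (a i) = Z i) {i : ℕ} (hi : i ≤ d) :
    LinearIndependent k (transferFamily a b n s i) := by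
  have hle := linearIndepOn_transferFamily_le hfib hYZ hW hra hka
  rw [← linearIndepOn_univ_iff]
  rcases hi.lt_or_eq with hi | rfl
  · have hge := linearIndepOn_transferFamily_ge hfib hnd hYZ hW hkb hrb (i + 1) hi
    have hsplit : Set.univ = {j | i + 1 ≤ n j} ∪ {j | n j ≤ i} := by
      ext; simp only [Set.mem_univ, Set.mem_ofPred_eq, Set.mem_union, true_iff]; omega
    rw [hsplit]
    refine (hge.1.union_map (f := b i) hge.2 ?_ (fun j hj => ?_)
      (hle i hi.le).1 (hle i hi.le).2 ?_).1
    · rw [hkb i hi]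
      exact (disjoint_iff.2 (inf_comm (Y _) _ ▸ hYZ (i + 1) hi)).disjoint_sup_of_isCompl
        (sup_comm (Y _) (Z _) ▸ hW (i + 1) hi)
    · exact LinearMap.congr_fun (transfer_of_lt a b hj) (s j)
    · rw [hrb i hi]
      exact ((disjoint_iff.2 (hYZ i hi.le)).disjoint_sup_of_isCompl (hW i hi.le)).symm
  · have hall : {j | n j ≤ i} = Set.univ := Set.eq_univ_of_forall hnd
    exact hall ▸ (hle i le_rfl).1

end Diagonalization

/-- Simultaneous diagonalization for exact limit linear series: given `(r+1)`-dimensional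
spaces `V_0, …, V_d` with maps `a_i : V_i → V_{i+1}`, `b_i : V_{i+1} → V_i` and subspaces
`Y_i, Z_i ⊆ V_i` satisfying the exactness conditions, there exist a nondecreasing sequence
`n_0 ≤ ⋯ ≤ n_r ≤ d` and vectors `s_j ∈ V_{n_j}` such that for each `i ≤ d` the iterated
images `t_{i,j}` of the `s_j` form a basis of `V_i`, and the images in `V_i/(Y_i + Z_i)`
of those `s_j` with `n_j = i` form a basis of `V_i/(Y_i + Z_i)`. -/
theorem exact_limit_series_diagonalization (k : Type*) [Field k] (d r : ℕ)
    (V : ℕ → Type*) [∀ i, AddCommGroup (V i)] [∀ i, Module k (V i)]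
    [∀ i, FiniteDimensional k (V i)]
    (hdim : ∀ i ≤ d, Module.finrank k (V i) = r + 1)
    (a : ∀ i, V i →ₗ[k] V (i + 1)) (b : ∀ i, V (i + 1) →ₗ[k] V i)
    (Y Z : ∀ i, Submodule k (V i))
    (hYZ : ∀ i ≤ d, Y i ⊓ Z i = ⊥)
    (hY0 : Y 0 = ⊥) (hZd : Z d = ⊥)
    (hra : ∀ i < d, LinearMap.range (a i) = Y (i + 1))
    (hkb : ∀ i < d, LinearMap.ker (b i) = Y (i + 1))
    (hrb : ∀ i < d, LinearMap.range (b i) = Z i)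
    (hka : ∀ i < d, LinearMap.ker (a i) = Z i) :
    ∃ (n : Fin (r + 1) → ℕ) (s : ∀ j, V (n j)),
      Monotone n ∧ (∀ j, n j ≤ d) ∧
      ∀ i ≤ d,
        (LinearIndependent k (fun j : Fin (r + 1) => transfer V a b (n j) i (s j)) ∧
          Submodule.span k
            (Set.range fun j : Fin (r + 1) => transfer V a b (n j) i (s j)) = ⊤) ∧
        (LinearIndependent k (fun j : {j : Fin (r + 1) // n j = i} =>
            Submodule.Quotient.mk (p := Y i ⊔ Z i) (j.2 ▸ s j.1)) ∧
          Submodule.span k (Set.range fun j : {j : Fin (r + 1) // n j = i} =>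
            Submodule.Quotient.mk (p := Y i ⊔ Z i) (j.2 ▸ s j.1)) = ⊤) := by
  classical
  choose W hW β hβ using fun i =>
    (Y i ⊔ Z i).exists_isCompl_basis_mkQ (Module.finBasis k (V i ⧸ (Y i ⊔ Z i)))
  obtain ⟨n, s, hmono, hnd, hs⟩ := exists_monotone_sections
    ((sum_finrank_quotient_sup_eq hYZ hY0 hZd hra hka).trans (hdim d le_rfl))
    fun i t => (β i t : V i)
  choose E hE using hs
  have hfib := fun i hi => linearIndepOn_transferFamily_fiber a b (β i) (E i hi) (hE i hi)
  refine ⟨n, s, hmono, hnd, fun i hi => ⟨?_, ?_⟩⟩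
  · have hli :=
      linearIndependent_transferFamily hfib hnd hYZ (fun i _ => hW i) hra hkb hrb hka hi
    exact ⟨hli, hli.span_eq_top_of_card_eq_finrank (by simp [hdim i hi])⟩
  · have hq :
        (fun x : {j // n j = i} => Submodule.Quotient.mk (p := Y i ⊔ Z i) (x.2 ▸ s x.1)) =
          (Module.finBasis k (V i ⧸ (Y i ⊔ Z i))).reindex (E i hi).symm := by
      ext x
      simp [hE i hi x, ← hβ]
    rw [hq]
    exact ⟨Module.Basis.linearIndependent _, Module.Basis.span_eq _⟩
end

section
/- Let d, p, q, r be natural numbers, let aY : {0,…,p} → ℕ and aZ : {0,…,q} → ℕ be strictly increasing sequences, and let i, j be natural numbers with 1 ≤ i ≤ p and j ≤ q such that aY(i−1) + aZ(j) < d. Suppose there exist strictly increasing sequences of indices i_0 < i_1 < ⋯ < i_r in {0,…,p} and j_0 < j_1 < ⋯ < j_r in {0,…,q} such that aY(i_s) + aZ(j_{r−s}) ≥ d for every s = 0,…,r. Then r + i + j ≤ p + q. -/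
/-!
The indices `s` of the limit series split in two: by monotonicity and `aY (i-1) + aZ j < d`,
the condition `d ≤ aY (i_s) + aZ (j_{r-s})` forces `i ≤ i_s` or `j < j_{r-s}`.
A strictly increasing `j_•` has `j_{r-s} ≤ q - s`, so for `s = q - j` the second alternative
fails; then `i ≤ i_{q-j}`, and the remaining `r - (q - j)` entries of `i_•` still fit below `p`.
-/

open Finset

/-- The entries of `f` after position `a` fit injectively into those after `f a`. -/
theorem Fin.val_apply_add_sub_le_of_strictMono {n m : ℕ} {f : Fin (n + 1) → Fin (m + 1)}
    (hf : StrictMono f) (a : Fin (n + 1)) : (f a : ℕ) + (n - a) ≤ m := by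
  have hcard : #(Ioi a) ≤ #(Ioi (f a)) :=
    card_le_card_of_injOn f (fun b hb => by simpa using hf (by simpa using hb)) hf.injective.injOn
  simp only [Fin.card_Ioi, add_tsub_cancel_right] at hcard
  have := (f a).isLt
  omega

/-- If `aY`, `aZ` are strictly increasing vanishing sequences, `1 ≤ i ≤ p`, `j ≤ q` with
`aY (i−1) + aZ j < d`, and there exist strictly increasing subsequences of indices
`i_0 < ⋯ < i_r` and `j_0 < ⋯ < j_r` with `aY (i_s) + aZ (j_{r−s}) ≥ d` for all `s`, then
`r + i + j ≤ p + q`. -/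
theorem no_limit_series_dimension_bound (d p q r : ℕ)
    (aY : Fin (p + 1) → ℕ) (aZ : Fin (q + 1) → ℕ)
    (hY : StrictMono aY) (hZ : StrictMono aZ)
    (i j : ℕ) (hip : i ≤ p) (hjq : j ≤ q)
    (hlt : aY ⟨i - 1, by omega⟩ + aZ ⟨j, by omega⟩ < d)
    (iseq : Fin (r + 1) → Fin (p + 1)) (jseq : Fin (r + 1) → Fin (q + 1))
    (hiseq : StrictMono iseq) (hjseq : StrictMono jseq)
    (hEH : ∀ s : Fin (r + 1), d ≤ aY (iseq s) + aZ (jseq s.rev)) :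
    r + i + j ≤ p + q := by
  have split (s : Fin (r + 1)) : i ≤ (iseq s : ℕ) ∨ j < (jseq s.rev : ℕ) := by
    have := (lt_or_lt_of_add_lt_add (hlt.trans_le (hEH s))).imp
      hY.monotone.reflect_lt hZ.monotone.reflect_lt
    simp only [Fin.lt_def] at this
    omega
  rcases lt_or_ge r (q - j) with hr | hr
  · omega
  let s : Fin (r + 1) := ⟨q - j, by omega⟩
  have hj := Fin.val_apply_add_sub_le_of_strictMono hjseq s.rev
  have hi := Fin.val_apply_add_sub_le_of_strictMono hiseq s
  have hs : i ≤ (iseq s : ℕ) :=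
    (split s).resolve_right (by simp only [Fin.val_rev, s] at hj ⊢; omega)
  simp only [s] at hi hs
  omega
end

section
/- Let k be a field, let r, p, q be natural numbers with p + q ≤ r, and let V be a k-vector space with basis s_0,…,s_r. Let a_p,…,a_r and b_0,…,b_{r−q} be scalars in k such that the vectors v_1 = Σ_{i=p}^{r} a_i·s_i and v_2 = Σ_{i=0}^{r−q} b_i·s_i are both nonzero. Set W_1 = span(s_0,…,s_{p−1}, v_1) and W_2 = span(v_2, s_{r−q+1},…,s_r). Then W_1 ∩ W_2 ≠ 0 if and only if a_j·b_ℓ = a_ℓ·b_j for all j, ℓ with p ≤ j, ℓ ≤ r−q. -/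
/-!
In the coordinates of the basis `s`, a vector lies in `W₁` iff it equals `c • a` on the indices
`i ≥ p`, and in `W₂` iff it equals `d • b` on the indices `i ≤ r - q`. These two index sets cover
`{0, …, r}`, so a common vector amounts to a pair `(c, d)` with `c • a = d • b` on the overlap
`p ≤ i ≤ r - q`, and it is nonzero iff `(c, d) ≠ 0` because `v₁` and `v₂` are nonzero. Such a pair
exists iff `a` and `b` are linearly dependent on the overlap, i.e. iff their `2 × 2` minors vanish.
-/

open Module Submodule

section

variable {ι k V : Type*} [Field k] [AddCommGroup V] [Module k V]

theorem Module.Basis.mem_span_image_union_singleton_iff (s : Basis ι k V) (S : Set ι) (v x : V) :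
    x ∈ span k (s '' S ∪ {v}) ↔ ∃ c : k, ∀ i ∉ S, s.repr x i = c * s.repr v i := by
  simp only [span_union, mem_sup, mem_span_singleton, s.mem_span_image]
  constructor
  · rintro ⟨y, hy, _, ⟨c, rfl⟩, rfl⟩
    refine ⟨c, fun i hi => ?_⟩
    have : s.repr y i = 0 := Finsupp.notMem_support_iff.1 fun h => hi (hy h)
    simp [this]
  · rintro ⟨c, hc⟩
    refine ⟨x - c • v, fun i hi => ?_, c • v, ⟨c, rfl⟩, sub_add_cancel x _⟩
    by_contra hiS
    exact Finsupp.mem_support_iff.1 hi (by simp [hc i hiS])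

theorem Module.Basis.repr_sum_filter_smul [Fintype ι] (s : Basis ι k V) (P : ι → Prop)
    [DecidablePred P] (a : ι → k) :
    s.repr (∑ i ∈ Finset.univ.filter P, a i • s i) = fun i => if P i then a i else 0 := by
  simp_rw [Finset.sum_filter, ← ite_zero_smul, s.repr_sum_self]

theorem Module.Basis.mem_span_image_union_sum_smul_iff [Fintype ι] (s : Basis ι k V)
    {S : Set ι} {P : ι → Prop} [DecidablePred P] (hSP : ∀ i, i ∉ S ↔ P i) (a : ι → k) (x : V) :
    x ∈ span k (s '' S ∪ {∑ i ∈ Finset.univ.filter P, a i • s i}) ↔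
      ∃ c : k, ∀ i, P i → s.repr x i = c * a i := by
  rw [s.mem_span_image_union_singleton_iff, s.repr_sum_filter_smul]
  refine exists_congr fun c => forall_congr' fun i => ?_
  rw [hSP]
  exact imp_congr_right fun hi => by simp only [if_pos hi]

theorem exists_ne_zero_of_sum_filter_smul_ne_zero {R M : Type*} [Zero R] [AddCommMonoid M]
    [SMulWithZero R M] [Fintype ι] {P : ι → Prop} [DecidablePred P] {a : ι → R} {v : ι → M}
    (h : ∑ i ∈ Finset.univ.filter P, a i • v i ≠ 0) : ∃ i, P i ∧ a i ≠ 0 := by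
  obtain ⟨i, hi, hai⟩ := Finset.exists_ne_zero_of_sum_ne_zero h
  exact ⟨i, (Finset.mem_filter.1 hi).2, left_ne_zero_of_smul hai⟩

theorem exists_ne_zero_proportional_on_iff_mul_eq_mul (P : ι → Prop) (a b : ι → k) :
    (∃ c d : k, (c ≠ 0 ∨ d ≠ 0) ∧ ∀ i, P i → c * a i = d * b i) ↔
      ∀ j l, P j → P l → a j * b l = a l * b j := by
  constructor
  · rintro ⟨c, d, hcd | hcd, h⟩ j l hj hl
    · refine mul_left_cancel₀ hcd ?_
      linear_combination b l * h j hj - b j * h l hl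
    · refine mul_left_cancel₀ hcd ?_
      linear_combination a l * h j hj - a j * h l hl
  · intro h
    by_cases ha : ∀ i, P i → a i = 0
    · exact ⟨1, 0, .inl one_ne_zero, fun i hi => by simp [ha i hi]⟩
    · push Not at ha
      obtain ⟨j, hj, haj⟩ := ha
      exact ⟨b j, a j, .inr haj, fun i hi => by linear_combination -h j i hj hi⟩

theorem exists_ne_zero_proportional_on_cover_iff {A B : ι → Prop} (hAB : ∀ i, A i ∨ B i)
    {α β : ι → k} (hα : ∃ i, A i ∧ α i ≠ 0) (hβ : ∃ i, B i ∧ β i ≠ 0) :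
    (∃ x : ι → k, x ≠ 0 ∧ (∃ c, ∀ i, A i → x i = c * α i) ∧ ∃ d, ∀ i, B i → x i = d * β i) ↔
      ∃ c d : k, (c ≠ 0 ∨ d ≠ 0) ∧ ∀ i, A i ∧ B i → c * α i = d * β i := by
  constructor
  · rintro ⟨x, hx, ⟨c, hc⟩, d, hd⟩
    refine ⟨c, d, ?_, fun i ⟨hA, hB⟩ => (hc i hA).symm.trans (hd i hB)⟩
    by_contra! hcd
    refine hx (funext fun i => ?_)
    rcases hAB i with hA | hB
    · simp [hc i hA, hcd.1]
    · simp [hd i hB, hcd.2]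
  · rintro ⟨c, d, hcd, h⟩
    classical
    set x : ι → k := fun i => if A i then c * α i else d * β i
    have hxA : ∀ i, A i → x i = c * α i := fun i hA => if_pos hA
    have hxB : ∀ i, B i → x i = d * β i := fun i hB => by
      by_cases hA : A i
      · exact (if_pos hA).trans (h i ⟨hA, hB⟩)
      · exact if_neg hA
    refine ⟨x, ?_, ⟨c, hxA⟩, d, hxB⟩
    rcases hcd with hc | hd
    · obtain ⟨i, hA, hαi⟩ := hα
      exact Function.ne_iff.2 ⟨i, by simp [hxA i hA, hc, hαi]⟩
    · obtain ⟨i, hB, hβi⟩ := hβ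
      exact Function.ne_iff.2 ⟨i, by simp [hxB i hB, hd, hβi]⟩

end

/-- With `s_0, …, s_r` a basis of `V`, `v₁ = Σ_{i=p}^{r} a_i s_i` and
`v₂ = Σ_{i=0}^{r−q} b_i s_i` nonzero, `W₁ = span(s_0,…,s_{p−1}, v₁)` and
`W₂ = span(v₂, s_{r−q+1},…,s_r)`, we have `W₁ ∩ W₂ ≠ 0` if and only if
`a_j b_ℓ = a_ℓ b_j` for all `p ≤ j, ℓ ≤ r − q`. -/
theorem nontrivial_intersection_iff_minors_vanish (k V : Type*) [Field k] [AddCommGroup V]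
    [Module k V] (r p q : ℕ) (hpq : p + q ≤ r)
    (s : Module.Basis (Fin (r + 1)) k V)
    (a b : Fin (r + 1) → k) (v₁ v₂ : V)
    (hv₁ : v₁ = ∑ i ∈ Finset.univ.filter (fun i : Fin (r + 1) => p ≤ (i : ℕ)), a i • s i)
    (hv₂ : v₂ = ∑ i ∈ Finset.univ.filter (fun i : Fin (r + 1) => (i : ℕ) ≤ r - q), b i • s i)
    (h₁ : v₁ ≠ 0) (h₂ : v₂ ≠ 0)
    (W₁ W₂ : Submodule k V)
    (hW₁ : W₁ = Submodule.span k ({x | ∃ i : Fin (r + 1), (i : ℕ) < p ∧ x = s i} ∪ {v₁}))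
    (hW₂ : W₂ = Submodule.span k
      ({v₂} ∪ {x | ∃ i : Fin (r + 1), r - q + 1 ≤ (i : ℕ) ∧ x = s i})) :
    W₁ ⊓ W₂ ≠ ⊥ ↔
      ∀ j l : Fin (r + 1), p ≤ (j : ℕ) → (j : ℕ) ≤ r - q →
        p ≤ (l : ℕ) → (l : ℕ) ≤ r - q → a j * b l = a l * b j := by
  have image_eq (P : Fin (r + 1) → Prop) : {x | ∃ i, P i ∧ x = s i} = s '' {i | P i} := by
    ext; simp [eq_comm]
  have hm₁ (x : V) : x ∈ W₁ ↔ ∃ c, ∀ i : Fin (r + 1), p ≤ (i : ℕ) → s.repr x i = c * a i := by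
    rw [hW₁, hv₁, image_eq]
    exact s.mem_span_image_union_sum_smul_iff (fun i => by simp) a x
  have hm₂ (x : V) : x ∈ W₂ ↔ ∃ d, ∀ i : Fin (r + 1), (i : ℕ) ≤ r - q → s.repr x i = d * b i := by
    rw [hW₂, Set.union_comm, hv₂, image_eq]
    exact s.mem_span_image_union_sum_smul_iff (fun i => by simp) b x
  have hcover (i : Fin (r + 1)) : p ≤ (i : ℕ) ∨ (i : ℕ) ≤ r - q := by omega
  rw [Ne, Submodule.eq_bot_iff]
  push Not
  calc (∃ x ∈ W₁ ⊓ W₂, x ≠ 0)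
      ↔ ∃ y : Fin (r + 1) → k, y ≠ 0 ∧ (∃ c, ∀ i : Fin (r + 1), p ≤ (i : ℕ) → y i = c * a i) ∧
          ∃ d, ∀ i : Fin (r + 1), (i : ℕ) ≤ r - q → y i = d * b i := by
        rw [s.equivFun.surjective.exists]
        refine exists_congr fun x => ?_
        rw [mem_inf, hm₁, hm₂, LinearEquiv.map_ne_zero_iff]
        exact and_comm
    _ ↔ ∃ c d : k, (c ≠ 0 ∨ d ≠ 0) ∧ ∀ i : Fin (r + 1), p ≤ (i : ℕ) ∧ (i : ℕ) ≤ r - q →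
          c * a i = d * b i :=
        exists_ne_zero_proportional_on_cover_iff hcover
          (exists_ne_zero_of_sum_filter_smul_ne_zero (hv₁ ▸ h₁))
          (exists_ne_zero_of_sum_filter_smul_ne_zero (hv₂ ▸ h₂))
    _ ↔ _ := (exists_ne_zero_proportional_on_iff_mul_eq_mul
          (fun i : Fin (r + 1) => p ≤ (i : ℕ) ∧ (i : ℕ) ≤ r - q) a b).trans (by simp only [and_imp])
end
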